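/- arXiv:0809.4402 — 6 statements merged into one kernel-verified Lean document; each statement's English description precedes it below -/
import Mathlib

section
/- Let A be an invertible 3×3 complex matrix with det A = 1 and tr(A⁻¹) = conj(tr A) (the complex conjugate of tr A). Then: (i) for every nonzero λ ∈ ℂ, det(A − λI) = −λ³ · conj( det(A − (1/conj(λ))·I) ); in particular λ is an eigenvalue of A if and only if 1/conj(λ) is, with the same algebraic multiplicity; and (ii) A has at least one eigenvalue λ with |λ| = 1. -/
/-!
Since `det A = 1`, the adjugate of `A` is `A⁻¹`, so the characteristic polynomial is
`p = X³ - t X² + t̄ X - 1` with `t = tr A`. Its conjugate reversal `X³ · p̄(1/X)` equals `-p`: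
`p` is self-inversive. Evaluating this identity gives (i); comparing multiplicities of the
factors `X - z` and `X - 1/z̄` gives (ii). So the involution `z ↦ 1/z̄` preserves the root
multiset of `p`, and its fixed points are the points of the unit circle. Roots off the circle
therefore come in pairs, and since `p` has odd degree, some root lies on the circle.
-/

open Matrix Polynomial

lemma Multiset.even_card_of_count_involutive {α : Type*} [DecidableEq α] {s : Multiset α}
    {σ : α → α} (hσ : Function.Involutive σ) (hcount : ∀ a, s.count (σ a) = s.count a)
    (hfix : ∀ a ∈ s, σ a ≠ a) : Even (card s) := by
  rw [← ZMod.natCast_eq_zero_iff_even, ← s.toFinset_sum_count_eq, Nat.cast_sum]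
  refine Finset.sum_involution (fun a _ => σ a) (fun a _ => ?_)
    (fun a ha _ => hfix a (by simpa using ha)) (fun a ha => ?_) (fun a _ => hσ a)
  · rw [hcount, CharTwo.add_self_eq_zero]
  · rw [Multiset.mem_toFinset, ← Multiset.count_pos, hcount, Multiset.count_pos]
    simpa using ha

lemma Complex.norm_eq_one_of_inv_conj_eq_self {z : ℂ} (hz : z ≠ 0)
    (h : (starRingEnd ℂ z)⁻¹ = z) : ‖z‖ = 1 := by
  have := congrArg (‖·‖) h
  simp only [norm_inv, Complex.norm_conj] at this
  have hpos : 0 < ‖z‖ := norm_pos_iff.mpr hz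
  field_simp at this
  nlinarith

namespace Polynomial

lemma reverse_pow {R : Type*} [Semiring R] [NoZeroDivisors R] (p : R[X]) (n : ℕ) :
    (p ^ n).reverse = p.reverse ^ n := by
  induction n with
  | zero => simpa using reverse_C (1 : R)
  | succ n ih => rw [pow_succ, reverse_mul_of_domain, ih, pow_succ]

lemma reverse_X_sub_C {K : Type*} [Field K] {a : K} (ha : a ≠ 0) :
    (X - C a).reverse = C (-a) * (X - C a⁻¹) := by
  have hX : (X : K[X]).reverse = 1 := by
    rw [← one_mul X, reverse_mul_X]; simpa using reverse_C (1 : K)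
  rw [sub_eq_add_neg, ← C_neg, reverse_add_C, hX, natDegree_X, mul_sub, ← C_mul, neg_mul,
    mul_inv_cancel₀ ha]
  simp only [C_neg, C_1, pow_one]
  ring

lemma rootMultiplicity_inv_reverse {K : Type*} [Field K] (p : K[X]) {a : K} (ha : a ≠ 0) :
    p.reverse.rootMultiplicity a⁻¹ = p.rootMultiplicity a := by
  obtain rfl | hp := eq_or_ne p 0
  · simp
  obtain ⟨q, e, hq⟩ := exists_eq_pow_rootMultiplicity_mul_and_not_dvd p hp a
  have hq0 : q ≠ 0 := by rintro rfl; simp at e; exact hp e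
  have hqa : q.reverse.eval a⁻¹ ≠ 0 := by
    let := invertibleOfNonzero ha
    rw [dvd_iff_isRoot, IsRoot.def] at hq
    rwa [← invOf_eq_inv, eval, ne_eq, eval₂_reverse_eq_zero_iff]
  conv_lhs => rw [e]
  rw [reverse_mul_of_domain, reverse_pow, reverse_X_sub_C ha, mul_pow, ← C_pow, mul_comm,
    ← mul_assoc, rootMultiplicity_mul_X_sub_C_pow, rootMultiplicity_eq_zero, zero_add]
  · simpa [ha] using hqa
  · simp [ha, hq0]

section SelfInversive

variable {p : ℂ[X]} (hp : (p.map (starRingEnd ℂ)).reverse = -p)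
include hp

lemma eval_eq_neg_pow_mul_conj_eval_inv_conj {z : ℂ} (hz : z ≠ 0) :
    p.eval z = -z ^ p.natDegree * starRingEnd ℂ (p.eval (starRingEnd ℂ z)⁻¹) := by
  let := invertibleOfNonzero (inv_ne_zero hz)
  have key := eval₂_reverse_mul_pow (RingHom.id ℂ) z⁻¹ (p.map (starRingEnd ℂ))
  rw [hp, natDegree_map, invOf_eq_inv, inv_inv, eval₂_id, eval₂_id, eval_neg,
    show z⁻¹ = starRingEnd ℂ (starRingEnd ℂ z)⁻¹ by simp, eval_map_apply] at key
  rw [← key, map_inv₀, Complex.conj_conj, inv_pow]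
  field_simp

lemma rootMultiplicity_inv_conj (z : ℂ) :
    p.rootMultiplicity (starRingEnd ℂ z)⁻¹ = p.rootMultiplicity z := by
  obtain rfl | hz := eq_or_ne z 0
  · simp
  calc p.rootMultiplicity (starRingEnd ℂ z)⁻¹
      = (-p).rootMultiplicity (starRingEnd ℂ z)⁻¹ := by simp_rw [← count_roots, roots_neg]
    _ = (p.map (starRingEnd ℂ)).rootMultiplicity (starRingEnd ℂ z) := by
      rw [← hp, rootMultiplicity_inv_reverse _ (by simpa using hz)]
    _ = p.rootMultiplicity z := (eq_rootMultiplicity_map (starRingEnd ℂ).injective z).symm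

lemma coeff_zero_ne_zero_of_reverse_map_conj_eq_neg (hp0 : p ≠ 0) : p.coeff 0 ≠ 0 := by
  have := congrArg (coeff · 0) hp
  simp only [coeff_zero_reverse, coeff_neg] at this
  rw [leadingCoeff_map] at this
  intro h
  rw [h, neg_zero, map_eq_zero, leadingCoeff_eq_zero] at this
  exact hp0 this

lemma exists_isRoot_norm_eq_one (hodd : Odd p.natDegree) : ∃ z, ‖z‖ = 1 ∧ p.IsRoot z := by
  have hp0 : p ≠ 0 := by rintro rfl; simp at hodd
  by_contra! hnone
  refine Nat.not_even_iff_odd.mpr hodd ?_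
  rw [← IsAlgClosed.card_roots_eq_natDegree]
  refine Multiset.even_card_of_count_involutive (σ := fun z => (starRingEnd ℂ z)⁻¹)
    (fun z => by simp) (fun z => by simp only [count_roots, rootMultiplicity_inv_conj hp])
    fun z hz hfix => ?_
  have hroot : p.IsRoot z := isRoot_of_mem_roots hz
  -- `0` is a junk fixed point of `z ↦ (conj z)⁻¹`; it is not a root.
  have hz0 : z ≠ 0 := by
    rintro rfl
    exact coeff_zero_ne_zero_of_reverse_map_conj_eq_neg hp hp0
      (coeff_zero_eq_eval_zero p ▸ hroot)
  exact hnone z (Complex.norm_eq_one_of_inv_conj_eq_self hz0 hfix) hroot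

end SelfInversive
end Polynomial

namespace Matrix

lemma charpoly_fin_three {R : Type*} [CommRing R] (A : Matrix (Fin 3) (Fin 3) R) :
    A.charpoly = X ^ 3 - C A.trace * X ^ 2 + C A.adjugate.trace * X - C A.det := by
  rw [charpoly, det_fin_three]
  simp [trace_fin_three, adjugate_fin_three, det_fin_three]
  ring

lemma det_sub_smul_one {R n : Type*} [CommRing R] [Fintype n] [DecidableEq n]
    (A : Matrix n n R) (x : R) :
    (A - x • (1 : Matrix n n R)).det = (-1) ^ Fintype.card n * A.charpoly.eval x := by
  rw [eval_charpoly, ← det_neg, neg_sub, smul_one_eq_diagonal, scalar_apply]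

variable {A : Matrix (Fin 3) (Fin 3) ℂ} (hA : A.det = 1)
  (htr : (A⁻¹).trace = starRingEnd ℂ A.trace)
include hA htr

lemma charpoly_eq_of_det_eq_one_of_trace_inv :
    A.charpoly = X ^ 3 - C A.trace * X ^ 2 + C (starRingEnd ℂ A.trace) * X - 1 := by
  rw [charpoly_fin_three, ← htr, inv_def, hA, Ring.inverse_one, one_smul, C_1]

lemma reverse_map_conj_charpoly_eq_neg :
    (A.charpoly.map (starRingEnd ℂ)).reverse = -A.charpoly := by
  have hdeg : (A.charpoly.map (starRingEnd ℂ)).natDegree = 3 := by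
    rw [natDegree_map, charpoly_natDegree_eq_dim, Fintype.card_fin]
  ext n
  rw [coeff_reverse, hdeg, charpoly_eq_of_det_eq_one_of_trace_inv hA htr]
  rcases le_or_gt n 3 with hn | hn
  · rw [revAt_le hn]
    interval_cases n <;> simp [coeff_X, coeff_one]
  · rw [revAt_eq_self_of_lt hn]
    simp [coeff_X, coeff_one, show n ≠ 0 by omega, show 1 ≠ n by omega, show n ≠ 2 by omega,
      show n ≠ 3 by omega]

end Matrix

/-- If `A` is an invertible 3×3 complex matrix with `det A = 1` and
`tr (A⁻¹) = conj (tr A)`, then (i) `det (A - λI) = -λ³ ⬝ conj (det (A - (1/conj λ) I))`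
for every `λ ≠ 0`; in particular `λ` is an eigenvalue iff `1/conj λ` is, with the same
algebraic multiplicity; and (ii) `A` has an eigenvalue on the unit circle. -/
theorem stmt_1 (A : Matrix (Fin 3) (Fin 3) ℂ) (hA : A.det = 1)
    (htr : (A⁻¹).trace = starRingEnd ℂ A.trace) :
    (∀ lam : ℂ, lam ≠ 0 →
      (A - lam • (1 : Matrix (Fin 3) (Fin 3) ℂ)).det =
        -lam ^ 3 *
          starRingEnd ℂ
            ((A - (1 / starRingEnd ℂ lam) • (1 : Matrix (Fin 3) (Fin 3) ℂ)).det)) ∧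
    (∀ lam : ℂ, lam ≠ 0 →
      Polynomial.rootMultiplicity lam A.charpoly =
        Polynomial.rootMultiplicity (1 / starRingEnd ℂ lam) A.charpoly) ∧
    (∃ lam : ℂ, ‖lam‖ = 1 ∧
      (A - lam • (1 : Matrix (Fin 3) (Fin 3) ℂ)).det = 0) := by
  have hp := reverse_map_conj_charpoly_eq_neg hA htr
  have hdeg : A.charpoly.natDegree = 3 := by
    rw [charpoly_natDegree_eq_dim, Fintype.card_fin]
  have hdet (x : ℂ) : (A - x • (1 : Matrix (Fin 3) (Fin 3) ℂ)).det = -A.charpoly.eval x := by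
    rw [det_sub_smul_one, Fintype.card_fin]
    ring
  refine ⟨fun lam hlam => ?_, fun lam _ => ?_, ?_⟩
  · rw [hdet, hdet, eval_eq_neg_pow_mul_conj_eval_inv_conj hp hlam, hdeg, one_div, map_neg]
    ring
  · rw [one_div, rootMultiplicity_inv_conj hp]
  · obtain ⟨z, hz, hroot⟩ := exists_isRoot_norm_eq_one hp (by rw [hdeg]; decide)
    exact ⟨z, hz, by rw [hdet, hroot.eq_zero, neg_zero]⟩
end

section
/- Let f : ℝ → ℝ be real-analytic and odd, with f(0) = f′(0) = f″(0) = 0 and f‴(0) > 0, and suppose f(x) → −∞ as x → +∞. Then f has only finitely many zeros in (0, ∞), it has at least one zero in (0, ∞), and the total number of zeros in (0, ∞) counted with multiplicity (the sum of the orders of vanishing of f at its positive zeros) is odd. -/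
/-!
Near a zero `x₀` an analytic function that does not vanish identically factors as
`(x - x₀) ^ m * g x` with `g x₀ ≠ 0`, where `m` is the order of vanishing, so crossing `x₀`
multiplies the sign of `f` by `(-1) ^ m`. Since `f` vanishes to order exactly three at `0` with
`f‴(0) > 0`, it is positive on some `(0, ε)`, and since `f → -∞` it is negative beyond some `M`.
The positive zeros are isolated zeros in `[ε / 2, M]`, hence finitely many, and crossing all of
them turns the sign `+` at `ε / 2` into `-` at `M`: the sum of their orders is odd, so in
particular nonzero.
-/

open Filter Topology Set

section Order

variable {𝕜 E : Type*} [NontriviallyNormedField 𝕜] [NormedAddCommGroup E] [NormedSpace 𝕜 E]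
  {f : 𝕜 → E} {x : 𝕜}

/-- When `f` vanishes near `x` both sides are `0`: `sInf ∅ = 0` and `(⊤ : ℕ∞).toNat = 0`. -/
theorem AnalyticAt.sInf_setOf_iteratedDeriv_ne_zero [CharZero 𝕜] [CompleteSpace E]
    (hf : AnalyticAt 𝕜 f x) :
    sInf {n : ℕ | iteratedDeriv n f x ≠ 0} = analyticOrderNatAt f x := by
  rcases eq_or_ne (analyticOrderAt f x) ⊤ with htop | hfin
  · have hempty : {n : ℕ | iteratedDeriv n f x ≠ 0} = ∅ :=
      eq_empty_of_forall_notMem fun n hn => hn <|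
        (natCast_le_analyticOrderAt_iff_iteratedDeriv_eq_zero hf).1 (htop ▸ le_top) n n.lt_succ_self
    simp [hempty, analyticOrderNatAt, htop]
  obtain ⟨hlow, hne⟩ := (analyticOrderAt_eq_nat_iff_iteratedDeriv_eq_zero hf).1
    (Nat.cast_analyticOrderNatAt hfin).symm
  exact le_antisymm (Nat.sInf_le hne)
    (le_csInf ⟨_, hne⟩ fun k hk => not_lt.1 fun hlt => hk (hlow k hlt))

theorem AnalyticOnNhd.analyticOrderAt_ne_top_of_ne_zero {U : Set 𝕜} {a : 𝕜}
    (hf : AnalyticOnNhd 𝕜 f U) (hU : IsPreconnected U) (ha : a ∈ U) (hfa : f a ≠ 0)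
    (hx : x ∈ U) : analyticOrderAt f x ≠ ⊤ :=
  hf.analyticOrderAt_ne_top_of_isPreconnected hU ha hx
    (by simp [analyticOrderAt_eq_zero.2 (Or.inr hfa)])

theorem AnalyticOnNhd.finite_inter_preimage_zero {K : Set 𝕜} {a : 𝕜} (hf : AnalyticOnNhd 𝕜 f K)
    (hK : IsCompact K) (hKc : IsConnected K) (ha : a ∈ K) (hfa : f a ≠ 0) :
    (K ∩ f ⁻¹' {0}).Finite := by
  simpa [sdiff_compl] using
    hK.finite_sdiff_of_mem_codiscreteWithin (hf.preimage_zero_mem_codiscreteWithin hfa ha hKc)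

end Order

theorem AnalyticAt.eventually_pos_nhdsGT_zero_of_iteratedDeriv_pos {f : ℝ → ℝ} {n : ℕ}
    (hf : AnalyticAt ℝ f 0) (hlow : ∀ k < n, iteratedDeriv k f 0 = 0) (hn : 0 < iteratedDeriv n f 0) :
    ∀ᶠ x in 𝓝[>] 0, 0 < f x := by
  obtain ⟨F, hF, hTaylor⟩ := hf.exists_eventuallyEq_sum_add_pow_mul (n + 1)
  set c := iteratedDeriv n f 0 / n.factorial
  have hc : 0 < c := by positivity
  have hfactor : ∀ᶠ x in 𝓝 0, f x = x ^ n * (c + x * F x) := by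
    filter_upwards [hTaylor] with x hx
    rw [hx, Finset.sum_range_succ, Finset.sum_eq_zero fun k hk => by
      simp [hlow k (Finset.mem_range.1 hk)]]
    simp only [smul_eq_mul, c]
    ring
  have hlim : Tendsto (fun x => c + x * F x) (𝓝 0) (𝓝 c) := by
    have hcont : ContinuousAt (fun x => c + x * F x) 0 := by
      have := hF.continuousAt
      fun_prop
    simpa using hcont.tendsto
  filter_upwards [nhdsWithin_le_nhds (hfactor.and (hlim.eventually (lt_mem_nhds hc))),
    self_mem_nhdsWithin] with x ⟨hx, hxc⟩ (hx0 : 0 < x)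
  rw [hx]
  positivity

theorem AnalyticAt.eventually_neg_one_pow_analyticOrderNatAt_mul_pos {f : ℝ → ℝ} {x₀ : ℝ}
    (hf : AnalyticAt ℝ f x₀) (hfin : analyticOrderAt f x₀ ≠ ⊤) :
    ∀ᶠ u in 𝓝[<] x₀, ∀ᶠ v in 𝓝[>] x₀,
      0 < (-1) ^ analyticOrderNatAt f x₀ * (f u * f v) := by
  obtain ⟨g, hg, hgx₀, hfg⟩ := hf.analyticOrderAt_ne_top.1 hfin
  set n := analyticOrderNatAt f x₀
  have hnear : ∀ᶠ x in 𝓝 x₀, f x = (x - x₀) ^ n * g x ∧ 0 < g x * g x₀ :=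
    hfg.and (hg.continuousAt.tendsto.mul_const (g x₀) |>.eventually
      (lt_mem_nhds (mul_self_pos.2 hgx₀)))
  filter_upwards [nhdsWithin_le_nhds hnear, self_mem_nhdsWithin] with u ⟨hu, hgu⟩ (hux : u < x₀)
  filter_upwards [nhdsWithin_le_nhds hnear, self_mem_nhdsWithin] with v ⟨hv, hgv⟩ (hxv : x₀ < v)
  have hguv : 0 < g u * g v :=
    pos_of_mul_pos_left (by nlinarith [mul_pos hgu hgv]) (mul_self_nonneg (g x₀))
  calc 0 < ((x₀ - u) * (v - x₀)) ^ n * (g u * g v) :=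
        mul_pos (pow_pos (mul_pos (by linarith) (by linarith)) n) hguv
    _ = (-1) ^ n * (f u * f v) := by
        rw [hu, hv, show (x₀ - u) * (v - x₀) = -1 * ((u - x₀) * (v - x₀)) by ring, mul_pow,
          mul_pow]
        ring

theorem mul_pos_of_continuousOn_Icc_of_ne_zero {f : ℝ → ℝ} {a b : ℝ} (hab : a ≤ b)
    (hf : ContinuousOn f (Icc a b)) (hne : ∀ x ∈ Icc a b, f x ≠ 0) : 0 < f a * f b := by
  by_contra! hle
  have hzero : (0 : ℝ) ∈ uIcc (f a) (f b) := by
    rw [mem_uIcc]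
    rcases mul_nonpos_iff.1 hle with h | h
    exacts [Or.inr ⟨h.2, h.1⟩, Or.inl h]
  obtain ⟨c, hc, hfc⟩ := intermediate_value_uIcc (uIcc_of_le hab ▸ hf) hzero
  exact hne c (uIcc_of_le hab ▸ hc) hfc

theorem neg_one_pow_sum_analyticOrderNatAt_mul_pos {f : ℝ → ℝ} (T : Finset ℝ) {a b : ℝ}
    (hab : a < b) (hc : ContinuousOn f (Icc a b)) (hT : ∀ x, x ∈ T ↔ x ∈ Ioo a b ∧ f x = 0)
    (hf : ∀ x ∈ T, AnalyticAt ℝ f x) (hfin : ∀ x ∈ T, analyticOrderAt f x ≠ ⊤)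
    (ha : f a ≠ 0) (hb : f b ≠ 0) :
    0 < (-1) ^ (∑ x ∈ T, analyticOrderNatAt f x) * (f a * f b) := by
  classical
  induction T using Finset.induction_on_max generalizing b with
  | empty =>
    rw [Finset.sum_empty, pow_zero, one_mul]
    refine mul_pos_of_continuousOn_Icc_of_ne_zero hab.le hc fun x hx hfx => ?_
    rcases hx.1.eq_or_lt with rfl | hax
    · exact ha hfx
    rcases hx.2.eq_or_lt with rfl | hxb
    · exact hb hfx
    simpa using (hT x).2 ⟨⟨hax, hxb⟩, hfx⟩
  | insert x₀ T hlt ih =>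
    have hx₀ := Finset.mem_insert_self x₀ T
    obtain ⟨⟨hax₀, hx₀b⟩, -⟩ := (hT x₀).1 hx₀
    have hbetween : ∀ᶠ u in 𝓝 x₀, a < u ∧ ∀ y ∈ T, y < u :=
      (eventually_gt_nhds hax₀).and ((T.eventually_all).2 fun y hy => eventually_gt_nhds (hlt y hy))
    obtain ⟨u, hsign, hux₀, hau, hTu⟩ :=
      ((hf x₀ hx₀).eventually_neg_one_pow_analyticOrderNatAt_mul_pos (hfin x₀ hx₀) |>.and <|
        Filter.Eventually.and self_mem_nhdsWithin (nhdsWithin_le_nhds hbetween)).exists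
    obtain ⟨v, hjump, hx₀v, hvb⟩ :=
      (hsign.and (Filter.Eventually.and self_mem_nhdsWithin
        (nhdsWithin_le_nhds (eventually_lt_nhds hx₀b)))).exists
    have hfu : f u ≠ 0 := fun h => by simp [h] at hjump
    have hTu' : ∀ x, x ∈ T ↔ x ∈ Ioo a u ∧ f x = 0 := by
      refine fun x => ⟨fun hx => ?_, fun ⟨⟨hax, hxu⟩, hfx⟩ => ?_⟩
      · obtain ⟨⟨hax, -⟩, hfx⟩ := (hT x).1 (Finset.mem_insert_of_mem hx)
        exact ⟨⟨hax, hTu x hx⟩, hfx⟩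
      · obtain rfl | hxT := Finset.mem_insert.1 ((hT x).2 ⟨⟨hax, by linarith⟩, hfx⟩)
        · linarith
        · exact hxT
    have hleft := ih hau (hc.mono (Icc_subset_Icc_right (by linarith))) hTu'
      (fun x hx => hf x (Finset.mem_insert_of_mem hx))
      (fun x hx => hfin x (Finset.mem_insert_of_mem hx)) hfu
    have hright : 0 < f v * f b := by
      refine mul_pos_of_continuousOn_Icc_of_ne_zero hvb.le
        (hc.mono (Icc_subset_Icc_left (by linarith))) fun x hx hfx => ?_
      rcases hx.2.eq_or_lt with rfl | hxb
      · exact hb hfx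
      obtain rfl | hxT := Finset.mem_insert.1 ((hT x).2 ⟨⟨by linarith [hx.1], hxb⟩, hfx⟩)
      · linarith [hx.1]
      · linarith [hlt x hxT, hx.1]
    rw [Finset.sum_insert fun h => (hlt x₀ h).false]
    -- the sign relations on `[a, u]`, across `x₀` and on `[v, b]` multiply to the goal times
    -- `(f u * f v) ^ 2`
    refine pos_of_mul_pos_left (b := (f u * f v) ^ 2) ?_ (sq_nonneg _)
    convert mul_pos (mul_pos hleft hjump) hright using 1
    ring

theorem AnalyticOnNhd.odd_sum_analyticOrderNatAt_of_mul_neg {f : ℝ → ℝ} {a b : ℝ}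
    (hf : AnalyticOnNhd ℝ f (Icc a b)) (hab : a < b) (hsign : f a * f b < 0) (T : Finset ℝ)
    (hT : ∀ x, x ∈ T ↔ x ∈ Ioo a b ∧ f x = 0) :
    Odd (∑ x ∈ T, analyticOrderNatAt f x) := by
  have hfa : f a ≠ 0 := fun h => by simp [h] at hsign
  have hmem : ∀ x ∈ T, x ∈ Icc a b := fun x hx => Ioo_subset_Icc_self ((hT x).1 hx).1
  have hpos := neg_one_pow_sum_analyticOrderNatAt_mul_pos T hab hf.continuousOn hT
    (fun x hx => hf x (hmem x hx))
    (fun x hx => hf.analyticOrderAt_ne_top_of_ne_zero isPreconnected_Icc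
      (left_mem_Icc.2 hab.le) hfa (hmem x hx))
    hfa (fun h => by simp [h] at hsign)
  rcases Nat.even_or_odd (∑ x ∈ T, analyticOrderNatAt f x) with heven | hodd
  · rw [heven.neg_one_pow, one_mul] at hpos
    exact absurd hpos hsign.not_gt
  · exact hodd

theorem stmt_3_general (f : ℝ → ℝ)
    (hana : AnalyticOnNhd ℝ f Set.univ)
    (h0 : f 0 = 0) (h1 : deriv f 0 = 0) (h2 : iteratedDeriv 2 f 0 = 0)
    (h3 : 0 < iteratedDeriv 3 f 0)
    (hinf : Tendsto f atTop atBot) :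
    ∃ S : Finset ℝ,
      (∀ x : ℝ, x ∈ S ↔ 0 < x ∧ f x = 0) ∧
      S.Nonempty ∧
      Odd (∑ x ∈ S, sInf {n : ℕ | iteratedDeriv n f x ≠ 0}) := by
  have hlow : ∀ k < 3, iteratedDeriv k f 0 = 0 := by
    intro k hk
    interval_cases k <;> simpa
  obtain ⟨ε, hε, hpos⟩ := (nhdsGT_basis (0 : ℝ)).eventually_iff.1
    ((hana 0 trivial).eventually_pos_nhdsGT_zero_of_iteratedDeriv_pos hlow h3)
  obtain ⟨M, hM⟩ := ((hinf.eventually (eventually_lt_atBot 0)).and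
    (eventually_gt_atTop (ε / 2))).exists_forall_of_atTop
  have hfδ : 0 < f (ε / 2) := hpos ⟨by linarith, by linarith⟩
  have hδM : ε / 2 < M := (hM M le_rfl).2
  have hzeros : ∀ x, 0 < x ∧ f x = 0 ↔ x ∈ Ioo (ε / 2) M ∧ f x = 0 := by
    refine fun x => ⟨fun ⟨hx, hfx⟩ => ⟨⟨?_, ?_⟩, hfx⟩, fun ⟨hx, hfx⟩ => ⟨by linarith [hx.1], hfx⟩⟩
    · by_contra! h
      exact (hpos ⟨hx, by linarith⟩).ne' hfx
    · by_contra! h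
      exact (hM x h).1.ne hfx
  have hZ : {x | 0 < x ∧ f x = 0}.Finite :=
    ((hana.mono (subset_univ _)).finite_inter_preimage_zero isCompact_Icc
      (isConnected_Icc hδM.le) ⟨le_rfl, hδM.le⟩ hfδ.ne').subset
      fun x hx => ⟨Ioo_subset_Icc_self ((hzeros x).1 hx).1, hx.2⟩
  have hT : ∀ x, x ∈ hZ.toFinset ↔ 0 < x ∧ f x = 0 := fun x => hZ.mem_toFinset
  have hodd := (hana.mono (subset_univ _)).odd_sum_analyticOrderNatAt_of_mul_neg hδM
    (mul_neg_of_pos_of_neg hfδ (hM M le_rfl).1) hZ.toFinset fun x => (hT x).trans (hzeros x)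
  simp only [(hana _ trivial).sInf_setOf_iteratedDeriv_ne_zero]
  exact ⟨hZ.toFinset, hT, Finset.nonempty_of_sum_ne_zero hodd.pos.ne', hodd⟩

/-- If `f : ℝ → ℝ` is real-analytic and odd, vanishes to exactly third order at `0`
with `f‴(0) > 0`, and tends to `-∞` at `+∞`, then `f` has finitely many positive zeros,
at least one positive zero, and the number of positive zeros counted with multiplicity
(the sum of the orders of vanishing) is odd. -/
theorem stmt_3 (f : ℝ → ℝ)
    (hana : AnalyticOnNhd ℝ f Set.univ)
    (hodd : ∀ x : ℝ, f (-x) = -f x)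
    (h0 : f 0 = 0) (h1 : deriv f 0 = 0) (h2 : iteratedDeriv 2 f 0 = 0)
    (h3 : 0 < iteratedDeriv 3 f 0)
    (hinf : Tendsto f atTop atBot) :
    ∃ S : Finset ℝ,
      (∀ x : ℝ, x ∈ S ↔ 0 < x ∧ f x = 0) ∧
      S.Nonempty ∧
      Odd (∑ x ∈ S, sInf {n : ℕ | iteratedDeriv n f x ≠ 0}) :=
  stmt_3_general f hana h0 h1 h2 h3 hinf
end

section
/- Let M be a function from a neighborhood of 0 in ℂ to the 3×3 complex matrices which is analytic, satisfies det M(μ) = 1 for all μ, is such that M(−μ) is similar to M(μ)⁻¹ for each μ, and such that M(0) − I has rank at most one. Then c(μ) := det(M(μ) − I) vanishes to order at least three at μ = 0, i.e. c(0) = c′(0) = c″(0) = 0, and a(μ) := tr M(μ) satisfies a(0) = 3 and a′(0) = 0. -/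
/-!
For `det A = 1` the characteristic polynomial of a 3×3 matrix gives
`det (A - 1) = tr A - tr A⁻¹`, so the symmetry `M(-μ) ∼ M(μ)⁻¹` makes `c(μ) = a(μ) - a(-μ)`
near `0`: an odd function, whence `c''(0) = 0` and `c'(0) = 2 a'(0)`. A rank-one matrix
`M(0) - I = u vᵀ` has vanishing 2×2 minors, hence zero adjugate, and Jacobi's formula
`c'(0) = tr (adj (M(0) - I) M'(0))` gives `c'(0) = 0`. Finally the matrix determinant lemma
`det (I + u vᵀ) = 1 + v ⬝ u` turns `det M(0) = 1` into `tr M(0) = 3`.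
-/

open Matrix Filter Topology

namespace Matrix

theorem exists_vecMulVec_eq_of_rank_le_one {m n K : Type*} [Fintype n] [Field K]
    (A : Matrix m n K) (h : A.rank ≤ 1) :
    ∃ u v, A = vecMulVec u v := by
  classical
  obtain ⟨w, hw⟩ := finrank_le_one_iff.mp h
  have hcol (k : n) : ∃ c : K, c • (w : m → K) = A *ᵥ Pi.single k 1 := by
    obtain ⟨c, hc⟩ := hw ⟨A *ᵥ Pi.single k 1, Pi.single k 1, rfl⟩
    exact ⟨c, congrArg Subtype.val hc⟩
  choose c hc using hcol
  refine ⟨w, c, ext fun i k => ?_⟩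
  have := congrFun (hc k) i
  simp only [mulVec_single_one, Pi.smul_apply, smul_eq_mul] at this
  rw [vecMulVec_apply, mul_comm, this]
  rfl

section CommRing

variable {R : Type*} [CommRing R]

theorem adjugate_vecMulVec {k : ℕ} (u v : Fin (k + 3) → R) : (vecMulVec u v).adjugate = 0 := by
  ext i j
  rw [adjugate_fin_succ_eq_det_submatrix, zero_apply,
    show (vecMulVec u v).submatrix j.succAbove i.succAbove =
      vecMulVec (u ∘ j.succAbove) (v ∘ i.succAbove) from rfl, det_vecMulVec, mul_zero]

theorem det_one_add_vecMulVec {n : Type*} [Fintype n] [DecidableEq n] (u v : n → R) :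
    (1 + vecMulVec u v).det = 1 + v ⬝ᵥ u := by
  rw [vecMulVec_eq Unit, det_one_add_replicateCol_mul_replicateRow]

theorem sum_det_updateCol_eq_trace_adjugate_mul {n : Type*} [Fintype n] [DecidableEq n]
    (A B : Matrix n n R) :
    ∑ j, (A.updateCol j (fun i => B i j)).det = (A.adjugate * B).trace := by
  simp only [← cramer_apply, cramer_eq_adjugate_mulVec, trace, diag, mul_apply, mulVec,
    dotProduct]

theorem det_sub_one_fin_three (A : Matrix (Fin 3) (Fin 3) R) :
    (A - 1).det = A.det - 1 + A.trace - A.adjugate.trace := by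
  simp only [det_fin_three, adjugate_fin_three, trace_fin_three, sub_apply, of_apply, cons_val',
    cons_val_zero, cons_val_one, cons_val, cons_val_fin_one, one_apply_eq, ne_eq, Fin.isValue,
    Fin.reduceEq, not_false_eq_true, one_apply_ne, sub_zero]
  ring

theorem det_sub_one_eq_trace_sub_trace_inv_of_det_eq_one {A : Matrix (Fin 3) (Fin 3) R}
    (h : A.det = 1) : (A - 1).det = A.trace - A⁻¹.trace := by
  rw [det_sub_one_fin_three, inv_def, h, Ring.inverse_one, one_smul, sub_self, zero_add]

end CommRing

theorem trace_eq_card_of_det_eq_one_of_rank_sub_one_le_one {n K : Type*} [Fintype n]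
    [DecidableEq n] [Field K] {A : Matrix n n K} (hdet : A.det = 1) (hrank : (A - 1).rank ≤ 1) :
    A.trace = Fintype.card n := by
  obtain ⟨u, v, huv⟩ := exists_vecMulVec_eq_of_rank_le_one _ hrank
  have hA : A = 1 + vecMulVec u v := by rw [← huv, add_sub_cancel]
  rw [hA, det_one_add_vecMulVec, add_eq_left] at hdet
  rw [hA, trace_add, trace_one, trace_vecMulVec, dotProduct_comm, hdet, add_zero]

section Jacobi

variable {n 𝕜 : Type*} [Fintype n] [DecidableEq n] [NontriviallyNormedField 𝕜]

theorem hasDerivAt_det {A : 𝕜 → Matrix n n 𝕜} {A' : Matrix n n 𝕜} {x : 𝕜}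
    (hA : ∀ i j, HasDerivAt (fun t => A t i j) (A' i j) x) :
    HasDerivAt (fun t => (A t).det) ((A x).adjugate * A').trace x := by
  rw [← sum_det_updateCol_eq_trace_adjugate_mul]
  simp only [det_apply']
  have hσ (σ : Equiv.Perm n) := (HasDerivAt.fun_finsetProd (u := Finset.univ)
    (fun i _ => hA (σ i) i)).const_mul (Equiv.Perm.sign σ : 𝕜)
  refine (HasDerivAt.fun_sum (u := Finset.univ) (fun σ _ => hσ σ)).congr_deriv ?_
  rw [Finset.sum_comm]
  refine Finset.sum_congr rfl fun σ _ => ?_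
  rw [Finset.mul_sum]
  refine Finset.sum_congr rfl fun j _ => ?_
  rw [← Finset.mul_prod_erase _ _ (Finset.mem_univ j), smul_eq_mul, updateCol_self,
    Finset.prod_congr rfl fun i hi => updateCol_ne (Finset.ne_of_mem_erase hi)]
  ring

theorem hasDerivAt_det_zero_of_rank_le_one {k : ℕ}
    {A : 𝕜 → Matrix (Fin (k + 3)) (Fin (k + 3)) 𝕜} {A' : Matrix (Fin (k + 3)) (Fin (k + 3)) 𝕜}
    {x : 𝕜}
    (hA : ∀ i j, HasDerivAt (fun t => A t i j) (A' i j) x) (hrank : (A x).rank ≤ 1) :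
    HasDerivAt (fun t => (A t).det) 0 x := by
  obtain ⟨u, v, huv⟩ := exists_vecMulVec_eq_of_rank_le_one _ hrank
  simpa [huv, adjugate_vecMulVec] using hasDerivAt_det hA

end Jacobi

end Matrix

theorem Function.odd_sub_comp_neg {α β : Type*} [InvolutiveNeg α] [SubtractionMonoid β]
    (f : α → β) : (fun x => f x - f (-x)).Odd := fun x => by
  simp only [neg_neg, neg_sub]

section OddFunction

variable {𝕜 F : Type*} [NontriviallyNormedField 𝕜] [NormedAddCommGroup F] [NormedSpace 𝕜 F]

theorem Function.Odd.iteratedDeriv_eq_zero_of_even [CharZero 𝕜] {f : 𝕜 → F} (hf : f.Odd)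
    {n : ℕ} (hn : Even n) : iteratedDeriv n f 0 = 0 := by
  have h := iteratedDeriv_comp_neg n f 0
  rw [show (fun x ↦ f (-x)) = fun x ↦ -f x from funext hf, iteratedDeriv_fun_neg,
    hn.neg_one_pow, one_smul, neg_zero] at h
  have h2 : (2 : 𝕜) • iteratedDeriv n f 0 = 0 := by
    rw [two_smul]; nth_rewrite 1 [← h]; exact neg_add_cancel _
  exact (smul_eq_zero.mp h2).resolve_left two_ne_zero

theorem deriv_sub_comp_neg_zero {f : 𝕜 → F} (hf : DifferentiableAt 𝕜 f 0) :
    deriv (fun x => f x - f (-x)) 0 = (2 : 𝕜) • deriv f 0 := by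
  rw [deriv_fun_sub hf (differentiableAt_comp_neg.mpr (by rwa [neg_zero])), deriv_comp_neg,
    neg_zero, sub_neg_eq_add, two_smul]

end OddFunction

/-- If `M(μ)` is a 3×3-matrix-valued function, analytic at `μ = 0`, with `det M(μ) = 1`
and `M(-μ)` similar to `M(μ)⁻¹` for all `μ` near `0`, and `M(0) - I` has rank at most
one, then `c(μ) = det (M(μ) - I)` vanishes to order at least three at `μ = 0`, and
`a(μ) = tr M(μ)` satisfies `a(0) = 3`, `a′(0) = 0`. -/
theorem stmt_7 (M : ℂ → Matrix (Fin 3) (Fin 3) ℂ)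
    (hana : ∀ i j : Fin 3, AnalyticAt ℂ (fun μ => M μ i j) 0)
    (hdet : ∀ᶠ μ in nhds (0 : ℂ), (M μ).det = 1)
    (hsim : ∀ᶠ μ in nhds (0 : ℂ), ∃ P : Matrix (Fin 3) (Fin 3) ℂ,
      IsUnit P.det ∧ M (-μ) = P * (M μ)⁻¹ * P⁻¹)
    (hrank : (M 0 - 1).rank ≤ 1) :
    ((M 0 - 1).det = 0 ∧
      deriv (fun μ => (M μ - 1).det) 0 = 0 ∧
      iteratedDeriv 2 (fun μ => (M μ - 1).det) 0 = 0) ∧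
    ((M 0).trace = 3 ∧ deriv (fun μ => (M μ).trace) 0 = 0) := by
  set a := fun μ => (M μ).trace
  have ha : DifferentiableAt ℂ a 0 :=
    DifferentiableAt.fun_sum fun i _ => (hana i i).differentiableAt
  have hc : (fun μ => (M μ - 1).det) =ᶠ[𝓝 0] fun μ => a μ - a (-μ) := by
    filter_upwards [hdet, hsim] with μ h1 ⟨P, hP, hMP⟩
    change _ = (M μ).trace - (M (-μ)).trace
    rw [det_sub_one_eq_trace_sub_trace_inv_of_det_eq_one h1, hMP,
      trace_conj ((isUnit_iff_isUnit_det P).mpr hP)]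
  have hc' : deriv (fun μ => (M μ - 1).det) 0 = 0 :=
    (hasDerivAt_det_zero_of_rank_le_one
      (fun i j => ((hana i j).differentiableAt.hasDerivAt.sub_const _)) hrank).deriv
  refine ⟨⟨?_, hc', ?_⟩, ?_, ?_⟩
  · obtain ⟨u, v, huv⟩ := exists_vecMulVec_eq_of_rank_le_one _ hrank
    rw [huv, det_vecMulVec]
  · rw [hc.iteratedDeriv_eq]
    exact (Function.odd_sub_comp_neg a).iteratedDeriv_eq_zero_of_even even_two
  · exact_mod_cast trace_eq_card_of_det_eq_one_of_rank_sub_one_le_one hdet.self_of_nhds hrank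
  · rw [hc.deriv_eq, deriv_sub_comp_neg_zero ha, smul_eq_mul] at hc'
    exact (mul_eq_zero.mp hc').resolve_left two_ne_zero
end

section
/- Let f : ℝ → ℝ be C¹ with antiderivative F (F′ = f), let D ⊆ ℝ³ be open with parameters (a,E,c), and let u : ℝ × D → ℝ be C² in x and C¹ in the parameters (with ∂ₓu also C¹ in the parameters), such that for every parameter value both u″ + f(u) − c·u = a and (1/2)(∂ₓu)² + F(u) − (c/2)u² − a·u = E hold identically in x. Then the following Wronskian identities hold identically: ∂ₓu·∂ₓ(∂u/∂E) − ∂ₓ²u·(∂u/∂E) = 1; ∂ₓu·∂ₓ(∂u/∂a) − ∂ₓ²u·(∂u/∂a) = u; and ∂ₓu·∂ₓ(∂u/∂c) − ∂ₓ²u·(∂u/∂c) = u²/2. -/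
/-!
Differentiate the first integral `(1/2)u_x² + F(u) - (c/2)u² - au = E` with respect to a
parameter `λ ∈ {a, E, c}`. Writing `w = ∂u/∂λ`, this gives
`u_x w_x + (f(u) - cu - a) w = ∂E/∂λ + (∂a/∂λ) u + (∂c/∂λ) u²/2`, and the travelling wave
equation turns `f(u) - cu - a` into `-u_xx`. The only analytic point is `w_x = ∂(u_x)/∂λ`:
writing `u(x) = u(0) + ∫₀ˣ u_x`, this follows from differentiation under the integral sign,
since `u_x` is `C¹` jointly in `(λ, x)`.
-/

open Set

section MixedPartials

theorem ContinuousOn.continuous_prodMk_left {X : Type*} [TopologicalSpace X] {H : ℝ × ℝ → X}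
    {I : Set ℝ} (hH : ContinuousOn H (I ×ˢ univ)) {s : ℝ} (hs : s ∈ I) :
    Continuous fun t => H (s, t) :=
  continuousOn_univ.1 <| hH.comp (Continuous.continuousOn (by fun_prop))
    fun t _ => ⟨hs, mem_univ t⟩

variable {E : Type*} [NormedAddCommGroup E] [NormedSpace ℝ E] {G : ℝ × ℝ → E} {I : Set ℝ}

theorem ContDiffOn.hasDerivAt_fst (hI : IsOpen I) (hG : ContDiffOn ℝ 1 G (I ×ˢ univ))
    {s : ℝ} (hs : s ∈ I) (t : ℝ) :
    HasDerivAt (fun s => G (s, t)) (fderiv ℝ G (s, t) (1, 0)) s := by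
  have hd : DifferentiableAt ℝ G (s, t) :=
    (hG.differentiableOn one_ne_zero).differentiableAt
      ((hI.prod isOpen_univ).mem_nhds ⟨hs, mem_univ t⟩)
  exact hd.hasFDerivAt.comp_hasDerivAt s ((hasDerivAt_id s).prodMk (hasDerivAt_const s t))

theorem ContDiffOn.continuousOn_fderiv_fst (hI : IsOpen I) (hG : ContDiffOn ℝ 1 G (I ×ˢ univ)) :
    ContinuousOn (fun z => fderiv ℝ G z (1, 0)) (I ×ˢ univ) :=
  (hG.continuousOn_fderiv_of_isOpen (hI.prod isOpen_univ) le_rfl).clm_apply continuousOn_const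

theorem hasDerivAt_intervalIntegral_of_contDiffOn (hI : IsOpen I)
    (hG : ContDiffOn ℝ 1 G (I ×ˢ univ)) {s₀ : ℝ} (hs₀ : s₀ ∈ I) (a b : ℝ) :
    HasDerivAt (fun s => ∫ t in a..b, G (s, t)) (∫ t in a..b, fderiv ℝ G (s₀, t) (1, 0)) s₀ := by
  obtain ⟨ε, hε, hball⟩ := Metric.isOpen_iff.1 hI s₀ hs₀
  have hK : Metric.closedBall s₀ (ε / 2) ⊆ I :=
    (Metric.closedBall_subset_ball (by linarith)).trans hball
  obtain ⟨C, hC⟩ := ((isCompact_closedBall s₀ (ε / 2)).prod isCompact_uIcc)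
    |>.exists_bound_of_continuousOn
    ((hG.continuousOn_fderiv_fst hI).mono (prod_mono hK (subset_univ (uIcc a b))))
  refine (intervalIntegral.hasDerivAt_integral_of_dominated_loc_of_deriv_le
    (F := fun s t => G (s, t)) (F' := fun s t => fderiv ℝ G (s, t) (1, 0))
    (μ := MeasureTheory.volume) (bound := fun _ => C) (Metric.ball_mem_nhds s₀ (half_pos hε))
    ?_ ?_ ?_ ?_ intervalIntegrable_const ?_).2
  · filter_upwards [hI.mem_nhds hs₀] with s hs
    exact (hG.continuousOn.continuous_prodMk_left hs).aestronglyMeasurable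
  · exact (hG.continuousOn.continuous_prodMk_left hs₀).intervalIntegrable a b
  · exact ((hG.continuousOn_fderiv_fst hI).continuous_prodMk_left hs₀).aestronglyMeasurable
  · exact .of_forall fun t ht s hs =>
      hC (s, t) ⟨Metric.ball_subset_closedBall hs, uIoc_subset_uIcc ht⟩
  · exact .of_forall fun t _ s hs =>
      hG.hasDerivAt_fst hI (hK (Metric.ball_subset_closedBall hs)) t

variable [CompleteSpace E] in
theorem hasDerivAt_deriv_fst_of_contDiffOn {W : ℝ × ℝ → E} (hI : IsOpen I)
    (hG : ContDiffOn ℝ 1 G (I ×ˢ univ))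
    (hWG : ∀ s ∈ I, ∀ t, HasDerivAt (fun t => W (s, t)) (G (s, t)) t)
    {s₀ : ℝ} (hs₀ : s₀ ∈ I) (hW₀ : DifferentiableAt ℝ (fun s => W (s, 0)) s₀) (x : ℝ) :
    HasDerivAt (fun t => deriv (fun s => W (s, t)) s₀) (deriv (fun s => G (s, x)) s₀) x := by
  have hW_ftc : ∀ s ∈ I, ∀ y, W (s, y) = W (s, 0) + ∫ t in (0 : ℝ)..y, G (s, t) := by
    intro s hs y
    rw [intervalIntegral.integral_eq_sub_of_hasDerivAt (fun t _ => hWG s hs t)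
      ((hG.continuousOn.continuous_prodMk_left hs).intervalIntegrable 0 y)]
    abel
  have hW_deriv : ∀ y, deriv (fun s => W (s, y)) s₀
      = deriv (fun s => W (s, 0)) s₀ + ∫ t in (0 : ℝ)..y, fderiv ℝ G (s₀, t) (1, 0) := by
    intro y
    refine HasDerivAt.deriv ?_
    refine (hW₀.hasDerivAt.add (hasDerivAt_intervalIntegral_of_contDiffOn hI hG hs₀ 0 y))
      |>.congr_of_eventuallyEq ?_
    filter_upwards [hI.mem_nhds hs₀] with s hs
    exact hW_ftc s hs y
  have hG'₀ := (hG.continuousOn_fderiv_fst hI).continuous_prodMk_left hs₀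
  rw [funext hW_deriv, (hG.hasDerivAt_fst hI hs₀ x).deriv]
  exact (intervalIntegral.integral_hasDerivAt_right (hG'₀.intervalIntegrable 0 x)
    hG'₀.aestronglyMeasurable.stronglyMeasurableAtFilter hG'₀.continuousAt).const_add _

end MixedPartials

open Filter Topology

theorem wronskian_eq_of_hasDerivAt_energy {f F : ℝ → ℝ} (hF : ∀ y, HasDerivAt F (f y) y)
    {γ : ℝ → ℝ × ℝ × ℝ} {w w' : ℝ → ℝ} {γ' : ℝ × ℝ × ℝ} {A B w'' s₀ : ℝ}
    (hγ : HasDerivAt γ γ' s₀) (hw : HasDerivAt w A s₀) (hw' : HasDerivAt w' B s₀)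
    (hEn : ∀ᶠ s in 𝓝 s₀,
      1 / 2 * w' s ^ 2 + F (w s) - (γ s).2.2 / 2 * w s ^ 2 - (γ s).1 * w s = (γ s).2.1)
    (hODE : w'' + f (w s₀) - (γ s₀).2.2 * w s₀ = (γ s₀).1) :
    w' s₀ * B - w'' * A = γ'.2.1 + γ'.1 * w s₀ + γ'.2.2 * w s₀ ^ 2 / 2 := by
  have hγa : HasDerivAt (fun s => (γ s).1) γ'.1 s₀ :=
    (ContinuousLinearMap.fst ℝ ℝ (ℝ × ℝ)).hasFDerivAt.comp_hasDerivAt s₀ hγ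
  have hγE : HasDerivAt (fun s => (γ s).2.1) γ'.2.1 s₀ :=
    ((ContinuousLinearMap.fst ℝ ℝ ℝ).comp (ContinuousLinearMap.snd ℝ ℝ (ℝ × ℝ))).hasFDerivAt
      |>.comp_hasDerivAt s₀ hγ
  have hγc : HasDerivAt (fun s => (γ s).2.2) γ'.2.2 s₀ :=
    ((ContinuousLinearMap.snd ℝ ℝ ℝ).comp (ContinuousLinearMap.snd ℝ ℝ (ℝ × ℝ))).hasFDerivAt
      |>.comp_hasDerivAt s₀ hγ
  have hEnergy := ((((hw'.pow 2).const_mul (1 / 2)).add ((hF (w s₀)).comp s₀ hw)).sub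
    ((hγc.div_const 2).mul (hw.pow 2))).sub (hγa.mul hw)
  have hEnergy_eq := (hEnergy.congr_of_eventuallyEq (hEn.mono fun s hs => hs.symm)).unique hγE
  simp only [Nat.cast_ofNat, Pi.pow_apply] at hEnergy_eq
  linear_combination hEnergy_eq - A * hODE

theorem wronskian_along_curve {f F : ℝ → ℝ} (hF : ∀ y, HasDerivAt F (f y) y)
    {D : Set (ℝ × ℝ × ℝ)} (hD : IsOpen D) {u : ℝ × ℝ × ℝ → ℝ → ℝ}
    (huC1 : ContDiffOn ℝ 1 (fun q : (ℝ × ℝ × ℝ) × ℝ => u q.1 q.2) (D ×ˢ univ))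
    (huxC1 : ContDiffOn ℝ 1 (fun q : (ℝ × ℝ × ℝ) × ℝ => deriv (u q.1) q.2) (D ×ˢ univ))
    (hODE : ∀ p ∈ D, ∀ x, deriv (deriv (u p)) x + f (u p x) - p.2.2 * u p x = p.1)
    (hEn : ∀ p ∈ D, ∀ x,
      1 / 2 * deriv (u p) x ^ 2 + F (u p x) - p.2.2 / 2 * u p x ^ 2 - p.1 * u p x = p.2.1)
    {γ : ℝ → ℝ × ℝ × ℝ} {γ' : ℝ × ℝ × ℝ} {s₀ : ℝ} (hγ : ContDiff ℝ 1 γ)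
    (hγ' : HasDerivAt γ γ' s₀) (hs₀ : γ s₀ ∈ D) (x : ℝ) :
    deriv (u (γ s₀)) x * deriv (fun y => deriv (fun s => u (γ s) y) s₀) x
        - deriv (deriv (u (γ s₀))) x * deriv (fun s => u (γ s) x) s₀
      = γ'.2.1 + γ'.1 * u (γ s₀) x + γ'.2.2 * u (γ s₀) x ^ 2 / 2 := by
  set I := γ ⁻¹' D
  have hI : IsOpen I := hD.preimage hγ.continuous
  have hφ : ContDiff ℝ 1 fun z : ℝ × ℝ => (γ z.1, z.2) :=
    (hγ.comp contDiff_fst).prodMk contDiff_snd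
  have hmaps : MapsTo (fun z : ℝ × ℝ => (γ z.1, z.2)) (I ×ˢ univ) (D ×ˢ univ) :=
    fun z hz => ⟨hz.1, mem_univ _⟩
  have hW : ContDiffOn ℝ 1 (fun z : ℝ × ℝ => u (γ z.1) z.2) (I ×ˢ univ) :=
    huC1.comp hφ.contDiffOn hmaps
  have hG : ContDiffOn ℝ 1 (fun z : ℝ × ℝ => deriv (u (γ z.1)) z.2) (I ×ˢ univ) :=
    huxC1.comp hφ.contDiffOn hmaps
  have hWG : ∀ s ∈ I, ∀ t, HasDerivAt (u (γ s)) (deriv (u (γ s)) t) t := fun s hs t =>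
    ((hW.differentiableOn one_ne_zero).differentiableAt ((hI.prod isOpen_univ).mem_nhds
      ⟨hs, mem_univ t⟩)).comp t (differentiableAt_const s |>.prodMk differentiableAt_id)
      |>.hasDerivAt
  have hmixed := hasDerivAt_deriv_fst_of_contDiffOn (W := fun z => u (γ z.1) z.2) hI hG
    hWG hs₀ (hW.hasDerivAt_fst hI hs₀ 0).differentiableAt x
  beta_reduce at hmixed
  rw [hmixed.deriv]
  refine wronskian_eq_of_hasDerivAt_energy (w := fun s => u (γ s) x)
    (w' := fun s => deriv (u (γ s)) x) hF hγ'
    (hW.hasDerivAt_fst hI hs₀ x).differentiableAt.hasDerivAt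
    (hG.hasDerivAt_fst hI hs₀ x).differentiableAt.hasDerivAt ?_ (hODE _ hs₀ x)
  filter_upwards [hI.mem_nhds hs₀] with s hs
  exact hEn _ hs x

theorem stmt_11_general (f F : ℝ → ℝ)
    (hF : ∀ x : ℝ, HasDerivAt F (f x) x)
    (D : Set (ℝ × ℝ × ℝ)) (hD : IsOpen D)
    (u : ℝ × ℝ × ℝ → ℝ → ℝ)
    (huC1 : ContDiffOn ℝ 1 (fun q : (ℝ × ℝ × ℝ) × ℝ => u q.1 q.2)
      (D ×ˢ (univ : Set ℝ)))
    (huxC1 : ContDiffOn ℝ 1 (fun q : (ℝ × ℝ × ℝ) × ℝ => deriv (u q.1) q.2)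
      (D ×ˢ (univ : Set ℝ)))
    (hODE : ∀ p ∈ D, ∀ x : ℝ,
      deriv (deriv (u p)) x + f (u p x) - p.2.2 * u p x = p.1)
    (hEn : ∀ p ∈ D, ∀ x : ℝ,
      1 / 2 * (deriv (u p) x) ^ 2 + F (u p x) - p.2.2 / 2 * (u p x) ^ 2
        - p.1 * u p x = p.2.1) :
    ∀ p ∈ D, ∀ x : ℝ,
      (deriv (u p) x * deriv (fun y => deriv (fun E => u (p.1, E, p.2.2) y) p.2.1) x
        - deriv (deriv (u p)) x * deriv (fun E => u (p.1, E, p.2.2) x) p.2.1 = 1) ∧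
      (deriv (u p) x * deriv (fun y => deriv (fun a => u (a, p.2.1, p.2.2) y) p.1) x
        - deriv (deriv (u p)) x * deriv (fun a => u (a, p.2.1, p.2.2) x) p.1
          = u p x) ∧
      (deriv (u p) x * deriv (fun y => deriv (fun c => u (p.1, p.2.1, c) y) p.2.2) x
        - deriv (deriv (u p)) x * deriv (fun c => u (p.1, p.2.1, c) x) p.2.2
          = (u p x) ^ 2 / 2) := by
  intro p hp x
  refine ⟨?_, ?_, ?_⟩
  · simpa using wronskian_along_curve hF hD huC1 huxC1 hODE hEn (γ := fun E => (p.1, E, p.2.2))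
      (by fun_prop)
      ((hasDerivAt_const _ _).prodMk ((hasDerivAt_id _).prodMk (hasDerivAt_const _ _))) hp x
  · simpa using wronskian_along_curve hF hD huC1 huxC1 hODE hEn (γ := fun a => (a, p.2.1, p.2.2))
      (by fun_prop)
      ((hasDerivAt_id _).prodMk (hasDerivAt_const _ _)) hp x
  · simpa using wronskian_along_curve hF hD huC1 huxC1 hODE hEn (γ := fun c => (p.1, p.2.1, c))
      (by fun_prop)
      ((hasDerivAt_const _ _).prodMk ((hasDerivAt_const _ _).prodMk (hasDerivAt_id _))) hp x

/-- Wronskian identities for the traveling wave family: if `u(x; a, E, c)` solves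
`u″ + f(u) - cu = a` with first integral `(1/2)(uₓ)² + F(u) - (c/2)u² - au = E`
(`F′ = f`, `f` of class `C¹`), with `u` of class `C²` in `x`, `C¹` in the parameters
and `uₓ` also `C¹` in the parameters, then
`uₓ ∂ₓ(∂u/∂E) - uₓₓ (∂u/∂E) = 1`, `uₓ ∂ₓ(∂u/∂a) - uₓₓ (∂u/∂a) = u`, and
`uₓ ∂ₓ(∂u/∂c) - uₓₓ (∂u/∂c) = u²/2`. Parameters: `p = (a, E, c)`. -/
theorem stmt_11 (f F : ℝ → ℝ) (hf : ContDiff ℝ 1 f)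
    (hF : ∀ x : ℝ, HasDerivAt F (f x) x)
    (D : Set (ℝ × ℝ × ℝ)) (hD : IsOpen D)
    (u : ℝ × ℝ × ℝ → ℝ → ℝ)
    (hu2 : ∀ p ∈ D, ContDiff ℝ 2 (u p))
    (huC1 : ContDiffOn ℝ 1 (fun q : (ℝ × ℝ × ℝ) × ℝ => u q.1 q.2)
      (D ×ˢ (univ : Set ℝ)))
    (huxC1 : ContDiffOn ℝ 1 (fun q : (ℝ × ℝ × ℝ) × ℝ => deriv (u q.1) q.2)
      (D ×ˢ (univ : Set ℝ)))
    (hODE : ∀ p ∈ D, ∀ x : ℝ,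
      deriv (deriv (u p)) x + f (u p x) - p.2.2 * u p x = p.1)
    (hEn : ∀ p ∈ D, ∀ x : ℝ,
      1 / 2 * (deriv (u p) x) ^ 2 + F (u p x) - p.2.2 / 2 * (u p x) ^ 2
        - p.1 * u p x = p.2.1) :
    ∀ p ∈ D, ∀ x : ℝ,
      (deriv (u p) x * deriv (fun y => deriv (fun E => u (p.1, E, p.2.2) y) p.2.1) x
        - deriv (deriv (u p)) x * deriv (fun E => u (p.1, E, p.2.2) x) p.2.1 = 1) ∧
      (deriv (u p) x * deriv (fun y => deriv (fun a => u (a, p.2.1, p.2.2) y) p.1) x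
        - deriv (deriv (u p)) x * deriv (fun a => u (a, p.2.1, p.2.2) x) p.1
          = u p x) ∧
      (deriv (u p) x * deriv (fun y => deriv (fun c => u (p.1, p.2.1, c) y) p.2.2) x
        - deriv (deriv (u p)) x * deriv (fun c => u (p.1, p.2.1, c) x) p.2.2
          = (u p x) ^ 2 / 2) :=
  stmt_11_general f F hF D hD u huC1 huxC1 hODE hEn
end

section
/- Let D ⊆ ℝ³ be open with parameters p = (a,E,c), let T, M : D → ℝ be C¹, let u : ℝ × D → ℝ be C¹ with u(x + T(p); p) = u(x; p) for all x, p, and define φ₂(x) as the determinant of the 3×3 matrix with rows (∂_au(x;p), ∂_aT(p), ∂_aM(p)), (∂_Eu(x;p), ∂_ET(p), ∂_EM(p)), (∂_cu(x;p), ∂_cT(p), ∂_cM(p)). Then φ₂ is periodic in x with period T(p). If moreover f : ℝ → ℝ is C², each u(·;p) is C³ in x and satisfies u″ + f(u) − c·u = a, and the x-derivatives of u up to third order are C¹ in the parameters, then φ₂ satisfies the Jordan-chain relation ∂ₓ( −φ₂″ − f′(u)·φ₂ + c·φ₂ ) = −( ∂_aT·∂_EM − ∂_ET·∂_aM )·∂ₓu.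 -/
/-!
Differentiating `u(x + T(p); p) = u(x; p)` in a parameter gives
`∂_p u(x + T) = ∂_p u(x) - u_x(x) ∂_p T`, so shifting `x` by a period subtracts `u_x(x)` times the
second column of the matrix defining `φ₂` from its first column, which does not change the
determinant. Differentiating the profile equation `u″ + f(u) - cu = a` in `a`, `E` and `c` shows
that `L[u] = -∂ₓ² - f′(u) + c` maps `u_a, u_E, u_c` to `-1, 0, -u`. As `L[u]` acts on the first
column only, `L[u]φ₂ = -(T_E M_c - T_c M_E) - (T_a M_E - T_E M_a) u`, and it remains to
differentiate in `x`.

Only `u` and its `x`-derivatives are assumed `C¹` in `(p, x)`, so Schwarz's theorem is not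
available; `∂ₓ ∂_p u = ∂_p ∂ₓ u` comes instead from `u(x) = u(0) + ∫₀ˣ u_x` by differentiating
under the integral sign.
-/

open Set Filter Topology MeasureTheory Function

noncomputable def linearizedOp (f w : ℝ → ℝ) (c : ℝ) (φ : ℝ → ℝ) (y : ℝ) : ℝ :=
  -(deriv (deriv φ) y) - deriv f (w y) * φ y + c * φ y

theorem Matrix.det_fin_three_of {R : Type*} [CommRing R] (a b c d e f g h i : R) :
    !![a, b, c; d, e, f; g, h, i].det
      = a * e * i - a * f * h - b * d * i + b * f * g + c * d * h - c * e * g := by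
  simp [Matrix.det_fin_three]

section DetFirstColumn

variable {v₁ v₂ v₃ : ℝ → ℝ} {b₁ b₂ b₃ d₁ d₂ d₃ : ℝ}

theorem hasDerivAt_det_fin_three_col_zero {v₁' v₂' v₃' y : ℝ} (h₁ : HasDerivAt v₁ v₁' y)
    (h₂ : HasDerivAt v₂ v₂' y) (h₃ : HasDerivAt v₃ v₃' y) :
    HasDerivAt (fun y => !![v₁ y, b₁, d₁; v₂ y, b₂, d₂; v₃ y, b₃, d₃].det)
      !![v₁', b₁, d₁; v₂', b₂, d₂; v₃', b₃, d₃].det y := by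
  simp only [Matrix.det_fin_three_of]
  refine ((((h₁.mul_const (b₂ * d₃ - d₂ * b₃)).fun_sub (h₂.mul_const (b₁ * d₃ - d₁ * b₃))).fun_add
    (h₃.mul_const (b₁ * d₂ - d₁ * b₂))).congr_deriv (by ring)).congr_of_eventuallyEq
    (.of_forall fun y => by ring)

theorem linearizedOp_det_fin_three_col_zero {f w : ℝ → ℝ} {c : ℝ}
    (h₁ : Differentiable ℝ v₁) (h₁' : Differentiable ℝ (deriv v₁))
    (h₂ : Differentiable ℝ v₂) (h₂' : Differentiable ℝ (deriv v₂))
    (h₃ : Differentiable ℝ v₃) (h₃' : Differentiable ℝ (deriv v₃)) :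
    linearizedOp f w c (fun y => !![v₁ y, b₁, d₁; v₂ y, b₂, d₂; v₃ y, b₃, d₃].det) =
      fun y => !![linearizedOp f w c v₁ y, b₁, d₁;
                  linearizedOp f w c v₂ y, b₂, d₂;
                  linearizedOp f w c v₃ y, b₃, d₃].det := by
  have hd : deriv (fun y => !![v₁ y, b₁, d₁; v₂ y, b₂, d₂; v₃ y, b₃, d₃].det) =
      fun y => !![deriv v₁ y, b₁, d₁; deriv v₂ y, b₂, d₂; deriv v₃ y, b₃, d₃].det :=
    funext fun y => (hasDerivAt_det_fin_three_col_zero (h₁ y).hasDerivAt (h₂ y).hasDerivAt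
      (h₃ y).hasDerivAt).deriv
  funext y
  simp only [linearizedOp]
  rw [hd, (hasDerivAt_det_fin_three_col_zero (h₁' y).hasDerivAt (h₂' y).hasDerivAt
    (h₃' y).hasDerivAt).deriv]
  simp only [Matrix.det_fin_three_of]
  ring

end DetFirstColumn

section ParamFamily

variable {g : ℝ → ℝ → ℝ} {s : Set ℝ} {a y : ℝ}

theorem DifferentiableAt.hasDerivAt_uncurry_left (hg : DifferentiableAt ℝ (uncurry g) (a, y)) :
    HasDerivAt (fun a' => g a' y) (fderiv ℝ (uncurry g) (a, y) (1, 0)) a := by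
  exact hg.hasFDerivAt.comp_hasDerivAt a ((hasDerivAt_id a).prodMk (hasDerivAt_const a y))

theorem DifferentiableAt.hasDerivAt_uncurry_right (hg : DifferentiableAt ℝ (uncurry g) (a, y)) :
    HasDerivAt (g a) (fderiv ℝ (uncurry g) (a, y) (0, 1)) y := by
  exact hg.hasFDerivAt.comp_hasDerivAt y ((hasDerivAt_const y a).prodMk (hasDerivAt_id y))

theorem ContDiffOn.differentiableAt_uncurry (hs : IsOpen s)
    (hg : ContDiffOn ℝ 1 (uncurry g) (s ×ˢ univ)) (ha : a ∈ s) :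
    DifferentiableAt ℝ (uncurry g) (a, y) :=
  (hg.contDiffAt ((hs.prod isOpen_univ).mem_nhds ⟨ha, mem_univ y⟩)).differentiableAt one_ne_zero

theorem ContinuousOn.continuous_uncurry_right (hg : ContinuousOn (uncurry g) (s ×ˢ univ))
    (ha : a ∈ s) : Continuous (g a) :=
  hg.comp_continuous (continuous_const.prodMk continuous_id) fun _ => ⟨ha, mem_univ _⟩

theorem ContDiffOn.continuousOn_partialDeriv_left (hs : IsOpen s)
    (hg : ContDiffOn ℝ 1 (uncurry g) (s ×ˢ univ)) :
    ContinuousOn (uncurry fun a t => fderiv ℝ (uncurry g) (a, t) (1, 0)) (s ×ˢ univ) :=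
  (hg.continuousOn_fderiv_of_isOpen (hs.prod isOpen_univ) le_rfl).clm_apply continuousOn_const

theorem hasDerivAt_intervalIntegral_of_contDiffOn_s15 (hs : IsOpen s)
    (hg : ContDiffOn ℝ 1 (uncurry g) (s ×ˢ univ)) (ha : a ∈ s) (b x : ℝ) :
    HasDerivAt (fun a' => ∫ t in b..x, g a' t)
      (∫ t in b..x, fderiv ℝ (uncurry g) (a, t) (1, 0)) a := by
  have hQ := hg.continuousOn_partialDeriv_left hs
  obtain ⟨ε, hε, hball⟩ := Metric.isOpen_iff.1 hs a ha
  have hK : Metric.closedBall a (ε / 2) ⊆ s :=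
    (Metric.closedBall_subset_ball (half_lt_self hε)).trans hball
  obtain ⟨C, hC⟩ := ((isCompact_closedBall a (ε / 2)).prod isCompact_uIcc)
    |>.exists_bound_of_continuousOn (hQ.mono (prod_mono hK (subset_univ (uIcc b x))))
  refine (intervalIntegral.hasDerivAt_integral_of_dominated_loc_of_deriv_le (μ := volume)
    (F' := fun a' t => fderiv ℝ (uncurry g) (a', t) (1, 0)) (bound := fun _ => C)
    (Metric.ball_mem_nhds a (half_pos hε)) ?_
    ((hg.continuousOn.continuous_uncurry_right ha).intervalIntegrable b x)
    (hQ.continuous_uncurry_right ha).aestronglyMeasurable ?_ intervalIntegrable_const ?_).2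
  · filter_upwards [hs.mem_nhds ha] with a' ha'
    exact (hg.continuousOn.continuous_uncurry_right ha').aestronglyMeasurable
  · exact .of_forall fun t ht a' ha' =>
      hC (a', t) ⟨Metric.ball_subset_closedBall ha', uIoc_subset_uIcc ht⟩
  · exact .of_forall fun t _ a' ha' => (hg.differentiableAt_uncurry hs
      (hK (Metric.ball_subset_closedBall ha'))).hasDerivAt_uncurry_left

theorem hasDerivAt_deriv_param_of_contDiffOn (hs : IsOpen s)
    (hg : ContDiffOn ℝ 1 (uncurry g) (s ×ˢ univ))
    (hg' : ContDiffOn ℝ 1 (uncurry fun a => deriv (g a)) (s ×ˢ univ)) (ha : a ∈ s) (x : ℝ) :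
    HasDerivAt (fun y => deriv (fun a' => g a' y) a) (deriv (fun a' => deriv (g a') x) a) x := by
  have hQ := (hg'.continuousOn_partialDeriv_left hs).continuous_uncurry_right ha
  have hFTC : ∀ a' ∈ s, ∀ y, g a' y = g a' 0 + ∫ t in (0 : ℝ)..y, deriv (g a') t := by
    intro a' ha' y
    rw [intervalIntegral.integral_deriv_eq_sub
      (fun t _ => (hg.differentiableAt_uncurry hs ha').hasDerivAt_uncurry_right.differentiableAt)
      ((hg'.continuousOn.continuous_uncurry_right ha').intervalIntegrable 0 y)]
    ring
  have hparam : ∀ y, deriv (fun a' => g a' y) a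
      = deriv (fun a' => g a' 0) a
        + ∫ t in (0 : ℝ)..y, fderiv ℝ (uncurry fun a => deriv (g a)) (a, t) (1, 0) := fun y =>
    ((((hg.differentiableAt_uncurry hs ha).hasDerivAt_uncurry_left.differentiableAt.hasDerivAt).add
      (hasDerivAt_intervalIntegral_of_contDiffOn_s15 hs hg' ha 0 y)).congr_of_eventuallyEq
      (eventually_of_mem (hs.mem_nhds ha) fun a' ha' => hFTC a' ha' y)).deriv
  rw [funext hparam, (hg'.differentiableAt_uncurry hs ha).hasDerivAt_uncurry_left.deriv]
  exact (hQ.integral_hasStrictDerivAt 0 x).hasDerivAt.const_add _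

theorem linearizedOp_deriv_param (hs : IsOpen s)
    (hg : ContDiffOn ℝ 1 (uncurry g) (s ×ˢ univ))
    (hg₁ : ContDiffOn ℝ 1 (uncurry fun a => deriv (g a)) (s ×ˢ univ))
    (hg₂ : ContDiffOn ℝ 1 (uncurry fun a => deriv (deriv (g a))) (s ×ˢ univ))
    {f : ℝ → ℝ} (hf : Differentiable ℝ f) {c e : ℝ → ℝ} {c' e' : ℝ} (ha : a ∈ s)
    (hc : HasDerivAt c c' a) (he : HasDerivAt e e' a)
    (hODE : ∀ a' ∈ s, ∀ y, deriv (deriv (g a')) y + f (g a' y) - c a' * g a' y = e a') :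
    Differentiable ℝ (fun y => deriv (fun a' => g a' y) a) ∧
      Differentiable ℝ (deriv fun y => deriv (fun a' => g a' y) a) ∧
      ∀ y, linearizedOp f (g a) (c a) (fun y => deriv (fun a' => g a' y) a) y
        = -(e' + c' * g a y) := by
  have hv := hasDerivAt_deriv_param_of_contDiffOn hs hg hg₁ ha
  have hw := hasDerivAt_deriv_param_of_contDiffOn hs hg₁ hg₂ ha
  have hv' : deriv (fun y => deriv (fun a' => g a' y) a)
      = fun y => deriv (fun a' => deriv (g a') y) a := funext fun y => (hv y).deriv
  refine ⟨fun y => (hv y).differentiableAt, hv' ▸ fun y => (hw y).differentiableAt, fun y => ?_⟩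
  have hgy : HasDerivAt (fun a' => g a' y) (deriv (fun a' => g a' y) a) a :=
    (hg.differentiableAt_uncurry hs ha).hasDerivAt_uncurry_left.differentiableAt.hasDerivAt
  have hODE' : HasDerivAt (fun a' => deriv (deriv (g a')) y)
      (e' - deriv f (g a y) * deriv (fun a' => g a' y) a
        + (c' * g a y + c a * deriv (fun a' => g a' y) a)) a :=
    ((he.fun_sub ((hf (g a y)).hasDerivAt.comp a hgy)).fun_add (hc.fun_mul hgy))
      |>.congr_of_eventuallyEq
      (eventually_of_mem (hs.mem_nhds ha) fun a' ha' => by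
        dsimp only [comp_apply]
        linarith [hODE a' ha' y])
  simp only [linearizedOp, hv', (hw y).deriv, hODE'.deriv]
  ring

theorem deriv_param_add_period {τ : ℝ → ℝ} {x : ℝ} (hg : DifferentiableAt ℝ (uncurry g) (a, x))
    (hτ : DifferentiableAt ℝ τ a) (hper : ∀ᶠ a' in 𝓝 a, ∀ y, g a' (y + τ a') = g a' y) :
    deriv (fun a' => g a' (x + τ a)) a
      = deriv (fun a' => g a' x) a - deriv (g a) x * deriv τ a := by
  have hγ : HasDerivAt (fun a' => (a', x + τ a - τ a')) ((1 : ℝ), -deriv τ a) a :=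
    (hasDerivAt_id a).prodMk (by simpa using hτ.hasDerivAt.const_sub (x + τ a))
  have hshift := hg.hasFDerivAt.comp_hasDerivAt_of_eq a hγ (by simp)
  -- periodicity at `a'` moves the point to `x + τ a - τ a'`, a curve through `(a, x)`
  have heq : (fun a' => g a' (x + τ a)) =ᶠ[𝓝 a] uncurry g ∘ fun a' => (a', x + τ a - τ a') :=
    hper.mono fun a' h => by
      rw [comp_apply, uncurry_apply_pair, ← h, sub_add_cancel]
  rw [(hshift.congr_of_eventuallyEq heq).deriv, hg.hasDerivAt_uncurry_left.deriv,
    hg.hasDerivAt_uncurry_right.deriv,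
    show ((1 : ℝ), -deriv τ a) = ((1 : ℝ), (0 : ℝ)) - deriv τ a • ((0 : ℝ), (1 : ℝ)) by simp,
    map_sub, map_smul, smul_eq_mul, mul_comm]

end ParamFamily

section Curve

variable {P : Type*} [NormedAddCommGroup P] [NormedSpace ℝ P] {D : Set P} {ι : ℝ → P}
  {n : WithTop ℕ∞}

theorem ContDiffOn.uncurry_comp_curve {h : P → ℝ → ℝ}
    (hh : ContDiffOn ℝ n (fun q : P × ℝ => h q.1 q.2) (D ×ˢ univ)) (hι : ContDiff ℝ n ι) :
    ContDiffOn ℝ n (uncurry fun a => h (ι a)) ((ι ⁻¹' D) ×ˢ univ) :=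
  hh.comp ((hι.comp contDiff_fst).prodMk contDiff_snd).contDiffOn fun _ hq => ⟨hq.1, trivial⟩

theorem ContDiffOn.uncurry_comp_curve_swap {u : ℝ → P → ℝ}
    (hu : ContDiffOn ℝ n (fun q : ℝ × P => u q.1 q.2) (univ ×ˢ D)) (hι : ContDiff ℝ n ι) :
    ContDiffOn ℝ n (uncurry fun a y => u y (ι a)) ((ι ⁻¹' D) ×ˢ univ) :=
  hu.comp (contDiff_snd.prodMk (hι.comp contDiff_fst)).contDiffOn fun _ hq => ⟨trivial, hq.1⟩

theorem deriv_curve_add_period (hD : IsOpen D) {T : P → ℝ} (hT : DifferentiableOn ℝ T D)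
    {u : ℝ → P → ℝ} (hu : ContDiffOn ℝ 1 (fun q : ℝ × P => u q.1 q.2) (univ ×ˢ D))
    (hper : ∀ x, ∀ p ∈ D, u (x + T p) p = u x p) (hι : ContDiff ℝ 1 ι) {a : ℝ} {p : P}
    (hp : p ∈ D) (hιa : ι a = p) (x : ℝ) :
    deriv (fun a' => u (x + T p) (ι a')) a
      = deriv (fun a' => u x (ι a')) a
        - deriv (fun y => u y p) x * deriv (fun a' => T (ι a')) a := by
  subst hιa
  have hs : IsOpen (ι ⁻¹' D) := hD.preimage hι.continuous
  exact deriv_param_add_period ((hu.uncurry_comp_curve_swap hι).differentiableAt_uncurry hs hp)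
    ((hT.differentiableAt (hD.mem_nhds hp)).comp a (hι.differentiable one_ne_zero a))
    (eventually_of_mem (hs.mem_nhds hp) fun a' ha' y => hper y (ι a') ha')

end Curve

theorem linearizedOp_deriv_curve {D : Set (ℝ × ℝ × ℝ)} (hD : IsOpen D) {u : ℝ → ℝ × ℝ × ℝ → ℝ}
    (hu : ContDiffOn ℝ 1 (fun q : ℝ × (ℝ × ℝ × ℝ) => u q.1 q.2) (univ ×ˢ D))
    (hu₁ : ContDiffOn ℝ 1 (fun q : (ℝ × ℝ × ℝ) × ℝ => deriv (fun y => u y q.1) q.2) (D ×ˢ univ))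
    (hu₂ : ContDiffOn ℝ 1
      (fun q : (ℝ × ℝ × ℝ) × ℝ => deriv (deriv (fun y => u y q.1)) q.2) (D ×ˢ univ))
    {f : ℝ → ℝ} (hf : Differentiable ℝ f)
    (hODE : ∀ p ∈ D, ∀ x, deriv (deriv (fun y => u y p)) x + f (u x p) - p.2.2 * u x p = p.1)
    {ι : ℝ → ℝ × ℝ × ℝ} (hι : ContDiff ℝ 1 ι) {a r₁ r₃ : ℝ} {p : ℝ × ℝ × ℝ} (hp : p ∈ D)
    (hιa : ι a = p) (hι₁ : HasDerivAt (fun a' => (ι a').1) r₁ a)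
    (hι₃ : HasDerivAt (fun a' => (ι a').2.2) r₃ a) :
    Differentiable ℝ (fun y => deriv (fun a' => u y (ι a')) a) ∧
      Differentiable ℝ (deriv fun y => deriv (fun a' => u y (ι a')) a) ∧
      ∀ y, linearizedOp f (fun y => u y p) p.2.2 (fun y => deriv (fun a' => u y (ι a')) a) y
        = -(r₁ + r₃ * u y p) := by
  subst hιa
  exact linearizedOp_deriv_param (hD.preimage hι.continuous) (hu.uncurry_comp_curve_swap hι)
    (hu₁.uncurry_comp_curve (h := fun p => deriv (fun y => u y p)) hι)
    (hu₂.uncurry_comp_curve (h := fun p => deriv (deriv (fun y => u y p))) hι)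
    hf hp hι₃ hι₁ fun a' ha' y => hODE (ι a') ha' y

/-- The paper's `φ₂ = {u, T, M}_{a,E,c}`. -/
noncomputable def jacobianDet (u : ℝ → ℝ × ℝ × ℝ → ℝ) (T M : ℝ × ℝ × ℝ → ℝ) (p : ℝ × ℝ × ℝ)
    (x : ℝ) : ℝ :=
  !![deriv (fun a => u x (a, p.2.1, p.2.2)) p.1,
       deriv (fun a => T (a, p.2.1, p.2.2)) p.1,
       deriv (fun a => M (a, p.2.1, p.2.2)) p.1;
     deriv (fun E => u x (p.1, E, p.2.2)) p.2.1,
       deriv (fun E => T (p.1, E, p.2.2)) p.2.1,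
       deriv (fun E => M (p.1, E, p.2.2)) p.2.1;
     deriv (fun c => u x (p.1, p.2.1, c)) p.2.2,
       deriv (fun c => T (p.1, p.2.1, c)) p.2.2,
       deriv (fun c => M (p.1, p.2.1, c)) p.2.2].det

section JacobianDet

variable {D : Set (ℝ × ℝ × ℝ)} {T M : ℝ × ℝ × ℝ → ℝ} {u : ℝ → ℝ × ℝ × ℝ → ℝ} {p : ℝ × ℝ × ℝ}

theorem jacobianDet_periodic (hD : IsOpen D) (hT : DifferentiableOn ℝ T D)
    (hu : ContDiffOn ℝ 1 (fun q : ℝ × (ℝ × ℝ × ℝ) => u q.1 q.2) (univ ×ˢ D))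
    (hper : ∀ x, ∀ p ∈ D, u (x + T p) p = u x p) (hp : p ∈ D) :
    Periodic (jacobianDet u T M p) (T p) := by
  intro x
  rw [jacobianDet, jacobianDet,
    deriv_curve_add_period hD hT hu hper (ι := fun t => (t, p.2.1, p.2.2)) (by fun_prop) hp rfl,
    deriv_curve_add_period hD hT hu hper (ι := fun t => (p.1, t, p.2.2)) (by fun_prop) hp rfl,
    deriv_curve_add_period hD hT hu hper (ι := fun t => (p.1, p.2.1, t)) (by fun_prop) hp rfl,
    Matrix.det_fin_three_of, Matrix.det_fin_three_of]
  ring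

theorem deriv_linearizedOp_jacobianDet (hD : IsOpen D)
    (hu : ContDiffOn ℝ 1 (fun q : ℝ × (ℝ × ℝ × ℝ) => u q.1 q.2) (univ ×ˢ D))
    (hu₁ : ContDiffOn ℝ 1 (fun q : (ℝ × ℝ × ℝ) × ℝ => deriv (fun y => u y q.1) q.2) (D ×ˢ univ))
    (hu₂ : ContDiffOn ℝ 1
      (fun q : (ℝ × ℝ × ℝ) × ℝ => deriv (deriv (fun y => u y q.1)) q.2) (D ×ˢ univ))
    {f : ℝ → ℝ} (hf : Differentiable ℝ f)
    (hODE : ∀ p ∈ D, ∀ x, deriv (deriv (fun y => u y p)) x + f (u x p) - p.2.2 * u x p = p.1)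
    (hp : p ∈ D) {x : ℝ} (hux : DifferentiableAt ℝ (fun y => u y p) x) :
    deriv (linearizedOp f (fun y => u y p) p.2.2 (jacobianDet u T M p)) x =
      -(deriv (fun a => T (a, p.2.1, p.2.2)) p.1 * deriv (fun E => M (p.1, E, p.2.2)) p.2.1
          - deriv (fun E => T (p.1, E, p.2.2)) p.2.1 * deriv (fun a => M (a, p.2.1, p.2.2)) p.1)
        * deriv (fun y => u y p) x := by
  obtain ⟨hva, hva', hLa⟩ := linearizedOp_deriv_curve hD hu hu₁ hu₂ hf hODE
    (ι := fun t => (t, p.2.1, p.2.2)) (by fun_prop) hp rfl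
    (hasDerivAt_id p.1) (hasDerivAt_const p.1 p.2.2)
  obtain ⟨hvE, hvE', hLE⟩ := linearizedOp_deriv_curve hD hu hu₁ hu₂ hf hODE
    (ι := fun t => (p.1, t, p.2.2)) (by fun_prop) hp rfl
    (hasDerivAt_const p.2.1 p.1) (hasDerivAt_const p.2.1 p.2.2)
  obtain ⟨hvc, hvc', hLc⟩ := linearizedOp_deriv_curve hD hu hu₁ hu₂ hf hODE
    (ι := fun t => (p.1, p.2.1, t)) (by fun_prop) hp rfl
    (hasDerivAt_const p.2.2 p.1) (hasDerivAt_id p.2.2)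
  have hcol : ∀ r₁ r₃ : ℝ, HasDerivAt (fun y => -(r₁ + r₃ * u y p))
      (-(r₃ * deriv (fun y => u y p) x)) x := fun r₁ r₃ =>
    ((hux.hasDerivAt.const_mul r₃).const_add r₁).neg
  delta jacobianDet
  simp only [linearizedOp_det_fin_three_col_zero hva hva' hvE hvE' hvc hvc', hLa, hLE, hLc]
  rw [(hasDerivAt_det_fin_three_col_zero (hcol 1 0) (hcol 0 0) (hcol 0 1)).deriv,
    Matrix.det_fin_three_of]
  ring

end JacobianDet

theorem stmt_15_general (D : Set (ℝ × ℝ × ℝ)) (hD : IsOpen D)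
    (T M : ℝ × ℝ × ℝ → ℝ) (hT : ContDiffOn ℝ 1 T D)
    (u : ℝ → ℝ × ℝ × ℝ → ℝ)
    (hu : ContDiffOn ℝ 1 (fun q : ℝ × (ℝ × ℝ × ℝ) => u q.1 q.2)
      ((univ : Set ℝ) ×ˢ D))
    (hper : ∀ x : ℝ, ∀ p ∈ D, u (x + T p) p = u x p) :
    ∀ p ∈ D, ∀ φ₂ : ℝ → ℝ,
      (∀ x : ℝ, φ₂ x = Matrix.det
        !![deriv (fun a => u x (a, p.2.1, p.2.2)) p.1,
             deriv (fun a => T (a, p.2.1, p.2.2)) p.1,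
             deriv (fun a => M (a, p.2.1, p.2.2)) p.1;
           deriv (fun E => u x (p.1, E, p.2.2)) p.2.1,
             deriv (fun E => T (p.1, E, p.2.2)) p.2.1,
             deriv (fun E => M (p.1, E, p.2.2)) p.2.1;
           deriv (fun c => u x (p.1, p.2.1, c)) p.2.2,
             deriv (fun c => T (p.1, p.2.1, c)) p.2.2,
             deriv (fun c => M (p.1, p.2.1, c)) p.2.2]) →
      Function.Periodic φ₂ (T p) ∧
      (∀ f : ℝ → ℝ, ContDiff ℝ 2 f →
        (∀ p' ∈ D, ContDiff ℝ 3 (fun x => u x p')) →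
        (∀ p' ∈ D, ∀ x : ℝ,
          deriv (deriv (fun y => u y p')) x + f (u x p') - p'.2.2 * u x p' = p'.1) →
        (∀ k : ℕ, k ≤ 3 →
          ContDiffOn ℝ 1
            (fun q : (ℝ × ℝ × ℝ) × ℝ => iteratedDeriv k (fun y => u y q.1) q.2)
            (D ×ˢ (univ : Set ℝ))) →
        ∀ x : ℝ,
          deriv (fun y =>
            -(deriv (deriv φ₂) y) - deriv f (u y p) * φ₂ y + p.2.2 * φ₂ y) x =
          -(deriv (fun a => T (a, p.2.1, p.2.2)) p.1
                * deriv (fun E => M (p.1, E, p.2.2)) p.2.1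
              - deriv (fun E => T (p.1, E, p.2.2)) p.2.1
                * deriv (fun a => M (a, p.2.1, p.2.2)) p.1)
            * deriv (fun y => u y p) x) := by
  intro p hp φ₂ hφ
  obtain rfl : φ₂ = jacobianDet u T M p := funext hφ
  refine ⟨jacobianDet_periodic hD (hT.differentiableOn one_ne_zero) hu hper hp,
    fun f hf hu₃ hODE hk x => ?_⟩
  have hu₁ : ContDiffOn ℝ 1 (fun q : (ℝ × ℝ × ℝ) × ℝ => deriv (fun y => u y q.1) q.2)
      (D ×ˢ univ) := by
    simpa only [iteratedDeriv_one] using hk 1 (by norm_num)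
  have hu₂ : ContDiffOn ℝ 1
      (fun q : (ℝ × ℝ × ℝ) × ℝ => deriv (deriv (fun y => u y q.1)) q.2) (D ×ˢ univ) := by
    simpa only [iteratedDeriv_succ, iteratedDeriv_zero] using hk 2 (by norm_num)
  exact deriv_linearizedOp_jacobianDet hD hu hu₁ hu₂ (hf.differentiable (by norm_num)) hODE hp
    ((hu₃ p hp).differentiable (by norm_num) x)

/-- For a `C¹` family `u(x; p)` of functions periodic in `x` with period `T(p)`,
`p = (a, E, c)`, and `M(p)` a `C¹` function (the mass), the determinant
`φ₂(x) = det [[u_a, T_a, M_a], [u_E, T_E, M_E], [u_c, T_c, M_c]]` is periodic in `x`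
with period `T(p)`.  If moreover `u(·;p)` is `C³` in `x` and solves
`u″ + f(u) - cu = a` with `f` of class `C²`, and the `x`-derivatives of `u` up to third
order are `C¹` in the parameters, then
`∂ₓ( -φ₂″ - f′(u) φ₂ + c φ₂ ) = -(T_a M_E - T_E M_a) ∂ₓu`. -/
theorem stmt_15 (D : Set (ℝ × ℝ × ℝ)) (hD : IsOpen D)
    (T M : ℝ × ℝ × ℝ → ℝ) (hT : ContDiffOn ℝ 1 T D) (hM : ContDiffOn ℝ 1 M D)
    (u : ℝ → ℝ × ℝ × ℝ → ℝ)
    (hu : ContDiffOn ℝ 1 (fun q : ℝ × (ℝ × ℝ × ℝ) => u q.1 q.2)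
      ((univ : Set ℝ) ×ˢ D))
    (hper : ∀ x : ℝ, ∀ p ∈ D, u (x + T p) p = u x p) :
    ∀ p ∈ D, ∀ φ₂ : ℝ → ℝ,
      (∀ x : ℝ, φ₂ x = Matrix.det
        !![deriv (fun a => u x (a, p.2.1, p.2.2)) p.1,
             deriv (fun a => T (a, p.2.1, p.2.2)) p.1,
             deriv (fun a => M (a, p.2.1, p.2.2)) p.1;
           deriv (fun E => u x (p.1, E, p.2.2)) p.2.1,
             deriv (fun E => T (p.1, E, p.2.2)) p.2.1,
             deriv (fun E => M (p.1, E, p.2.2)) p.2.1;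
           deriv (fun c => u x (p.1, p.2.1, c)) p.2.2,
             deriv (fun c => T (p.1, p.2.1, c)) p.2.2,
             deriv (fun c => M (p.1, p.2.1, c)) p.2.2]) →
      Function.Periodic φ₂ (T p) ∧
      (∀ f : ℝ → ℝ, ContDiff ℝ 2 f →
        (∀ p' ∈ D, ContDiff ℝ 3 (fun x => u x p')) →
        (∀ p' ∈ D, ∀ x : ℝ,
          deriv (deriv (fun y => u y p')) x + f (u x p') - p'.2.2 * u x p' = p'.1) →
        (∀ k : ℕ, k ≤ 3 →
          ContDiffOn ℝ 1
            (fun q : (ℝ × ℝ × ℝ) × ℝ => iteratedDeriv k (fun y => u y q.1) q.2)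
            (D ×ˢ (univ : Set ℝ))) →
        ∀ x : ℝ,
          deriv (fun y =>
            -(deriv (deriv φ₂) y) - deriv f (u y p) * φ₂ y + p.2.2 * φ₂ y) x =
          -(deriv (fun a => T (a, p.2.1, p.2.2)) p.1
                * deriv (fun E => M (p.1, E, p.2.2)) p.2.1
              - deriv (fun E => T (p.1, E, p.2.2)) p.2.1
                * deriv (fun a => M (a, p.2.1, p.2.2)) p.1)
            * deriv (fun y => u y p) x) :=
  stmt_15_general D hD T M hT u hu hper
end

section
/- Let D ⊆ ℝ³ be open with parameters p = (a,E,c), T : D → ℝ and u : ℝ × D → ℝ be C¹ with u(x + T(p); p) = u(x; p) for all x, p, and define M(p) = ∫₀^{T(p)} u(x;p) dx and P(p) = ∫₀^{T(p)} u(x;p)² dx. Then for each parameter direction ξ ∈ {a,E,c}: ∫₀^{T(p)} ∂_ξu(x;p) dx = ∂_ξM(p) − u(0;p)·∂_ξT(p) and ∫₀^{T(p)} u(x;p)·∂_ξu(x;p) dx = (1/2)∂_ξP(p) − (1/2)u(0;p)²·∂_ξT(p). Consequently, for φ₀(x) = ∂_aT·∂_Eu(x) − ∂_ET·∂_au(x):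 ∫₀^{T(p)} φ₀(x) dx = ∂_aT·∂_EM − ∂_ET·∂_aM and ∫₀^{T(p)} u(x;p)·φ₀(x) dx = (1/2)(∂_aT·∂_EP − ∂_ET·∂_aP). -/
/-!
Along a parameter curve `γ`, differentiate `M (γ s) = ∫₀^{T (γ s)} u(x, γ s) dx` by the Leibniz
rule: the derivative is `∫₀^T ∂ₛu + u(T) ∂ₛT`, and periodicity turns `u(T)` into `u(0)`. The same
computation for `u²`, whose parameter derivative is `2 u ∂ₛu`, gives the momentum identity, and the
identities for `φ₀` follow by linearity. The Leibniz rule with a moving endpoint comes from the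
strict differentiability of `(s, t) ↦ ∫ₐᵗ v(x, s) dx`, whose two partial derivatives
`∫ₐᵗ ∂ₛv(x, s) dx` and `v(t, s)` are continuous.
-/

open Set MeasureTheory

open Function Filter Topology intervalIntegral

theorem ContinuousOn.continuous_uncurry_right_s16 {X Y Z : Type*} [TopologicalSpace X]
    [TopologicalSpace Y] [TopologicalSpace Z] {f : X → Y → Z} {s : Set Y}
    (hf : ContinuousOn (uncurry f) (univ ×ˢ s)) {y : Y} (hy : y ∈ s) : Continuous (f · y) :=
  hf.comp_continuous (continuous_id.prodMk continuous_const) fun _ => ⟨trivial, hy⟩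

theorem intervalIntegral.integral_const_mul_sub_const_mul {f g : ℝ → ℝ} {a b : ℝ}
    (hf : IntervalIntegrable f volume a b) (hg : IntervalIntegrable g volume a b) (α β : ℝ) :
    ∫ x in a..b, (α * f x - β * g x) = α * (∫ x in a..b, f x) - β * ∫ x in a..b, g x := by
  rw [integral_sub (hf.const_mul α) (hg.const_mul β), integral_const_mul, integral_const_mul]

section Leibniz

variable {v w : ℝ → ℝ → ℝ} {I : Set ℝ}

theorem hasDerivAt_intervalIntegral_param (hI : IsOpen I)
    (hv : ContinuousOn (uncurry v) (univ ×ˢ I)) (hw : ContinuousOn (uncurry w) (univ ×ˢ I))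
    (hvw : ∀ x, ∀ s ∈ I, HasDerivAt (v x ·) (w x s) s) (a b : ℝ) {s₀ : ℝ} (hs₀ : s₀ ∈ I) :
    HasDerivAt (fun s => ∫ x in a..b, v x s) (∫ x in a..b, w x s₀) s₀ := by
  obtain ⟨δ, hδ, hball⟩ := Metric.nhds_basis_closedBall.mem_iff.mp (hI.mem_nhds hs₀)
  obtain ⟨C, hC⟩ := (isCompact_uIcc.prod (isCompact_closedBall s₀ δ)).exists_bound_of_continuousOn
    (hw.mono (prod_mono (subset_univ _) hball))
  refine (hasDerivAt_integral_of_dominated_loc_of_deriv_le (μ := volume) (F := fun s x => v x s)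
    (F' := fun s x => w x s) (bound := fun _ => C) (Metric.closedBall_mem_nhds s₀ hδ)
    ?_ ?_ ?_ ?_ intervalIntegrable_const ?_).2
  · filter_upwards [hI.mem_nhds hs₀] with s hs
    exact (hv.continuous_uncurry_right_s16 hs).aestronglyMeasurable
  · exact (hv.continuous_uncurry_right_s16 hs₀).intervalIntegrable _ _
  · exact (hw.continuous_uncurry_right_s16 hs₀).aestronglyMeasurable
  · exact .of_forall fun x hx s hs => hC (x, s) ⟨uIoc_subset_uIcc hx, hs⟩
  · exact .of_forall fun x _ s hs => hvw x s (hball hs)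

theorem continuousAt_parametric_primitive_of_continuousOn (hI : IsOpen I)
    (hw : ContinuousOn (uncurry w) (univ ×ˢ I)) (a : ℝ) {s₀ : ℝ} (hs₀ : s₀ ∈ I) (b : ℝ) :
    ContinuousAt (fun q : ℝ × ℝ => ∫ x in a..q.2, w x q.1) (s₀, b) := by
  -- `w` is only continuous for parameters in `I`: pass to the subtype, an open embedding.
  have hψ : Continuous fun q : I × ℝ => ∫ x in a..q.2, w x q.1 :=
    continuous_parametric_primitive_of_continuous (f := fun (s : I) x => w x s) <|
      hw.comp_continuous (continuous_snd.prodMk (continuous_subtype_val.comp continuous_fst))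
        fun q => ⟨trivial, q.1.2⟩
  exact (hI.isOpenEmbedding_subtypeVal.prodMap .id).continuousAt_iff
    (g := fun q : ℝ × ℝ => ∫ x in a..q.2, w x q.1) (x := (⟨s₀, hs₀⟩, b)) |>.mp hψ.continuousAt

theorem hasDerivAt_intervalIntegral_param_upper (hI : IsOpen I)
    (hv : ContinuousOn (uncurry v) (univ ×ˢ I)) (hw : ContinuousOn (uncurry w) (univ ×ˢ I))
    (hvw : ∀ x, ∀ s ∈ I, HasDerivAt (v x ·) (w x s) s) (a : ℝ) {S : ℝ → ℝ} {S' s₀ : ℝ}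
    (hS : HasDerivAt S S' s₀) (hs₀ : s₀ ∈ I) :
    HasDerivAt (fun s => ∫ x in a..S s, v x s)
      ((∫ x in a..S s₀, w x s₀) + v (S s₀) s₀ * S') s₀ := by
  have hI' : ∀ᶠ q : ℝ × ℝ in 𝓝 (s₀, S s₀), q.1 ∈ I :=
    continuousAt_fst.preimage_mem_nhds (hI.mem_nhds hs₀)
  have hF := hasStrictFDerivAt_uncurry_coprod (u := (s₀, S s₀))
    (f := fun s t => ∫ x in a..t, v x s)
    (f₁ := fun s t => (1 : ℝ →L[ℝ] ℝ).smulRight (∫ x in a..t, w x s))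
    (f₂ := fun s t => (1 : ℝ →L[ℝ] ℝ).smulRight (v t s)) ?_ ?_ ?_ ?_
  · refine (hF.hasFDerivAt.comp_hasDerivAt s₀ ((hasDerivAt_id s₀).prodMk hS)).congr_deriv ?_
    simp [HasUncurry.uncurry, mul_comm]
  · filter_upwards [hI'] with q hq
    exact hasDerivAt_intervalIntegral_param hI hv hw hvw a q.2 hq
  · filter_upwards [hI'] with q hq
    exact ((hv.continuous_uncurry_right_s16 hq).integral_hasStrictDerivAt a q.2).hasDerivAt
  · exact (ContinuousLinearMap.smulRightL ℝ ℝ ℝ 1).continuous.continuousAt.comp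
      (continuousAt_parametric_primitive_of_continuousOn hI hw a hs₀ (S s₀))
  · exact (ContinuousLinearMap.smulRightL ℝ ℝ ℝ 1).continuous.continuousAt.comp <|
      (hv.continuousAt ((isOpen_univ.prod hI).mem_nhds ⟨trivial, hs₀⟩)).comp
        (continuousAt_snd.prodMk continuousAt_fst)

theorem integral_param_deriv_eq_of_periodic (hI : IsOpen I)
    (hv : ContinuousOn (uncurry v) (univ ×ˢ I)) (hw : ContinuousOn (uncurry w) (univ ×ˢ I))
    (hvw : ∀ x, ∀ s ∈ I, HasDerivAt (v x ·) (w x s) s) {S m : ℝ → ℝ} {S' s₀ : ℝ}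
    (hS : HasDerivAt S S' s₀) (hs₀ : s₀ ∈ I) (hper : v (S s₀) s₀ = v 0 s₀)
    (hm : ∀ s ∈ I, m s = ∫ x in 0..S s, v x s) :
    ∫ x in 0..S s₀, w x s₀ = deriv m s₀ - v 0 s₀ * S' := by
  have hm' : m =ᶠ[𝓝 s₀] fun s => ∫ x in 0..S s, v x s :=
    eventually_of_mem (hI.mem_nhds hs₀) hm
  rw [((hasDerivAt_intervalIntegral_param_upper hI hv hw hvw 0 hS hs₀).congr_of_eventuallyEq
    hm').deriv, hper]
  ring

theorem integral_mul_param_deriv_eq_of_periodic (hI : IsOpen I)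
    (hv : ContinuousOn (uncurry v) (univ ×ˢ I)) (hw : ContinuousOn (uncurry w) (univ ×ˢ I))
    (hvw : ∀ x, ∀ s ∈ I, HasDerivAt (v x ·) (w x s) s) {S q : ℝ → ℝ} {S' s₀ : ℝ}
    (hS : HasDerivAt S S' s₀) (hs₀ : s₀ ∈ I) (hper : v (S s₀) s₀ = v 0 s₀)
    (hq : ∀ s ∈ I, q s = ∫ x in 0..S s, v x s ^ 2) :
    ∫ x in 0..S s₀, v x s₀ * w x s₀ = 1 / 2 * deriv q s₀ - 1 / 2 * v 0 s₀ ^ 2 * S' := by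
  have h := integral_param_deriv_eq_of_periodic (v := fun x s => v x s ^ 2)
    (w := fun x s => 2 * (v x s * w x s)) hI (hv.fun_pow 2)
    (continuousOn_const.fun_mul (hv.fun_mul hw))
    (fun x s hs => ((hvw x s hs).fun_pow 2).congr_deriv (by norm_num; ring)) hS hs₀
    (by rw [hper]) hq
  rw [intervalIntegral.integral_const_mul] at h
  linarith

end Leibniz

section ContDiff

variable {v : ℝ → ℝ → ℝ} {I : Set ℝ}

theorem hasDerivAt_fderiv_apply_of_contDiffOn (hI : IsOpen I)
    (hv : ContDiffOn ℝ 1 (uncurry v) (univ ×ˢ I)) (x : ℝ) {s : ℝ} (hs : s ∈ I) :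
    HasDerivAt (v x ·) (fderiv ℝ (uncurry v) (x, s) (0, 1)) s :=
  ((hv.contDiffAt ((isOpen_univ.prod hI).mem_nhds ⟨trivial, hs⟩)).differentiableAt
    one_ne_zero).hasFDerivAt.comp_hasDerivAt s ((hasDerivAt_const s x).prodMk (hasDerivAt_id s))

theorem hasDerivAt_deriv_of_contDiffOn (hI : IsOpen I)
    (hv : ContDiffOn ℝ 1 (uncurry v) (univ ×ˢ I)) (x : ℝ) {s : ℝ} (hs : s ∈ I) :
    HasDerivAt (v x ·) (deriv (v x ·) s) s :=
  (hasDerivAt_fderiv_apply_of_contDiffOn hI hv x hs).differentiableAt.hasDerivAt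

theorem continuousOn_deriv_of_contDiffOn (hI : IsOpen I)
    (hv : ContDiffOn ℝ 1 (uncurry v) (univ ×ˢ I)) :
    ContinuousOn (uncurry fun x s => deriv (v x ·) s) (univ ×ˢ I) :=
  ((hv.continuousOn_fderiv_of_isOpen (isOpen_univ.prod hI) le_rfl).clm_apply
    continuousOn_const).congr fun q hq =>
      (hasDerivAt_fderiv_apply_of_contDiffOn hI hv q.1 hq.2).deriv

end ContDiff

section Curve

variable {H : Type*} [NormedAddCommGroup H] [NormedSpace ℝ H] {D : Set H} {u : ℝ → H → ℝ}
  {T : H → ℝ} {γ : ℝ → H} {s₀ : ℝ} {p : H}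

theorem ContDiffOn.uncurry_comp_right (hu : ContDiffOn ℝ 1 (uncurry u) (univ ×ˢ D))
    (hγ : ContDiff ℝ 1 γ) :
    ContDiffOn ℝ 1 (uncurry fun x s => u x (γ s)) (univ ×ˢ (γ ⁻¹' D)) :=
  hu.comp (contDiff_fst.prodMk (hγ.comp contDiff_snd)).contDiffOn fun _ hq => ⟨trivial, hq.2⟩

theorem hasDerivAt_comp_curve (hD : IsOpen D) (hT : ContDiffOn ℝ 1 T D) (hγ : ContDiff ℝ 1 γ)
    (hs₀ : γ s₀ ∈ D) : HasDerivAt (fun s => T (γ s)) (deriv (fun s => T (γ s)) s₀) s₀ :=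
  (((hT.comp hγ.contDiffOn (mapsTo_preimage γ D)).contDiffAt
    ((hD.preimage hγ.continuous).mem_nhds hs₀)).differentiableAt one_ne_zero).hasDerivAt

theorem continuous_deriv_comp_curve (hD : IsOpen D)
    (hu : ContDiffOn ℝ 1 (uncurry u) (univ ×ˢ D)) (hγ : ContDiff ℝ 1 γ) (hs₀ : γ s₀ ∈ D) :
    Continuous fun x => deriv (fun s => u x (γ s)) s₀ :=
  (continuousOn_deriv_of_contDiffOn (hD.preimage hγ.continuous)
    (hu.uncurry_comp_right hγ)).continuous_uncurry_right_s16 hs₀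

theorem integral_deriv_comp_curve_eq {M : H → ℝ} (hD : IsOpen D) (hT : ContDiffOn ℝ 1 T D)
    (hu : ContDiffOn ℝ 1 (uncurry u) (univ ×ˢ D))
    (hM : ∀ p ∈ D, M p = ∫ x in 0..T p, u x p)
    (hγ : ContDiff ℝ 1 γ) (hγs₀ : γ s₀ = p) (hp : p ∈ D) (hper : u (T p) p = u 0 p) :
    ∫ x in 0..T p, deriv (fun s => u x (γ s)) s₀ =
      deriv (fun s => M (γ s)) s₀ - u 0 p * deriv (fun s => T (γ s)) s₀ := by
  subst hγs₀
  have hI := hD.preimage hγ.continuous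
  have hv := hu.uncurry_comp_right hγ
  exact integral_param_deriv_eq_of_periodic (v := fun x s => u x (γ s)) hI hv.continuousOn
    (continuousOn_deriv_of_contDiffOn hI hv)
    (fun x _ hs => hasDerivAt_deriv_of_contDiffOn hI hv x hs)
    (hasDerivAt_comp_curve hD hT hγ hp) hp hper fun s hs => hM (γ s) hs

theorem integral_mul_deriv_comp_curve_eq {P : H → ℝ} (hD : IsOpen D) (hT : ContDiffOn ℝ 1 T D)
    (hu : ContDiffOn ℝ 1 (uncurry u) (univ ×ˢ D))
    (hP : ∀ p ∈ D, P p = ∫ x in 0..T p, u x p ^ 2)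
    (hγ : ContDiff ℝ 1 γ) (hγs₀ : γ s₀ = p) (hp : p ∈ D) (hper : u (T p) p = u 0 p) :
    ∫ x in 0..T p, u x p * deriv (fun s => u x (γ s)) s₀ =
      1 / 2 * deriv (fun s => P (γ s)) s₀ - 1 / 2 * u 0 p ^ 2 * deriv (fun s => T (γ s)) s₀ := by
  subst hγs₀
  have hI := hD.preimage hγ.continuous
  have hv := hu.uncurry_comp_right hγ
  exact integral_mul_param_deriv_eq_of_periodic (v := fun x s => u x (γ s)) hI hv.continuousOn
    (continuousOn_deriv_of_contDiffOn hI hv)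
    (fun x _ hs => hasDerivAt_deriv_of_contDiffOn hI hv x hs)
    (hasDerivAt_comp_curve hD hT hγ hp) hp hper fun s hs => hP (γ s) hs

end Curve

/-- For a `C¹` family `u(x; p)` periodic in `x` with `C¹` period `T(p)`,
`p = (a, E, c)`, with mass `M(p) = ∫₀^{T(p)} u` and momentum `P(p) = ∫₀^{T(p)} u²`:
for each parameter direction `ξ`, `∫₀^T ∂_ξ u = ∂_ξ M - u(0) ∂_ξ T` and
`∫₀^T u ∂_ξ u = (1/2) ∂_ξ P - (1/2) u(0)² ∂_ξ T`; consequently for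
`φ₀ = T_a ∂_E u - T_E ∂_a u` one has `∫₀^T φ₀ = T_a M_E - T_E M_a` and
`∫₀^T u φ₀ = (1/2)(T_a P_E - T_E P_a)`. -/
theorem stmt_16 (D : Set (ℝ × ℝ × ℝ)) (hD : IsOpen D)
    (T : ℝ × ℝ × ℝ → ℝ) (hT : ContDiffOn ℝ 1 T D)
    (u : ℝ → ℝ × ℝ × ℝ → ℝ)
    (hu : ContDiffOn ℝ 1 (fun q : ℝ × (ℝ × ℝ × ℝ) => u q.1 q.2)
      ((univ : Set ℝ) ×ˢ D))
    (hper : ∀ x : ℝ, ∀ p ∈ D, u (x + T p) p = u x p)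
    (M P : ℝ × ℝ × ℝ → ℝ)
    (hM : ∀ p ∈ D, M p = ∫ x in (0 : ℝ)..T p, u x p)
    (hP : ∀ p ∈ D, P p = ∫ x in (0 : ℝ)..T p, (u x p) ^ 2) :
    ∀ p ∈ D, ∀ ua uE uc : ℝ → ℝ, ∀ Ta TE Tc Ma ME Mc Pa PE Pc : ℝ,
      (∀ x : ℝ, ua x = deriv (fun a => u x (a, p.2.1, p.2.2)) p.1) →
      (∀ x : ℝ, uE x = deriv (fun E => u x (p.1, E, p.2.2)) p.2.1) →
      (∀ x : ℝ, uc x = deriv (fun c => u x (p.1, p.2.1, c)) p.2.2) →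
      Ta = deriv (fun a => T (a, p.2.1, p.2.2)) p.1 →
      TE = deriv (fun E => T (p.1, E, p.2.2)) p.2.1 →
      Tc = deriv (fun c => T (p.1, p.2.1, c)) p.2.2 →
      Ma = deriv (fun a => M (a, p.2.1, p.2.2)) p.1 →
      ME = deriv (fun E => M (p.1, E, p.2.2)) p.2.1 →
      Mc = deriv (fun c => M (p.1, p.2.1, c)) p.2.2 →
      Pa = deriv (fun a => P (a, p.2.1, p.2.2)) p.1 →
      PE = deriv (fun E => P (p.1, E, p.2.2)) p.2.1 →
      Pc = deriv (fun c => P (p.1, p.2.1, c)) p.2.2 →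
      ((∫ x in (0 : ℝ)..T p, ua x) = Ma - u 0 p * Ta) ∧
      ((∫ x in (0 : ℝ)..T p, uE x) = ME - u 0 p * TE) ∧
      ((∫ x in (0 : ℝ)..T p, uc x) = Mc - u 0 p * Tc) ∧
      ((∫ x in (0 : ℝ)..T p, u x p * ua x) = 1 / 2 * Pa - 1 / 2 * (u 0 p) ^ 2 * Ta) ∧
      ((∫ x in (0 : ℝ)..T p, u x p * uE x) = 1 / 2 * PE - 1 / 2 * (u 0 p) ^ 2 * TE) ∧
      ((∫ x in (0 : ℝ)..T p, u x p * uc x) = 1 / 2 * Pc - 1 / 2 * (u 0 p) ^ 2 * Tc) ∧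
      ((∫ x in (0 : ℝ)..T p, (Ta * uE x - TE * ua x)) = Ta * ME - TE * Ma) ∧
      ((∫ x in (0 : ℝ)..T p, u x p * (Ta * uE x - TE * ua x)) =
        1 / 2 * (Ta * PE - TE * Pa)) := by
  intro p hp ua uE uc Ta TE Tc Ma ME Mc Pa PE Pc hua huE huc hTa hTE hTc hMa hME hMc hPa hPE hPc
  obtain rfl : ua = _ := funext hua
  obtain rfl : uE = _ := funext huE
  obtain rfl : uc = _ := funext huc
  subst Ta TE Tc Ma ME Mc Pa PE Pc
  have hper₀ : u (T p) p = u 0 p := by simpa using hper 0 p hp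
  have line_a : ContDiff ℝ 1 fun a => ((a, p.2.1, p.2.2) : ℝ × ℝ × ℝ) := by fun_prop
  have line_E : ContDiff ℝ 1 fun E => ((p.1, E, p.2.2) : ℝ × ℝ × ℝ) := by fun_prop
  have line_c : ContDiff ℝ 1 fun c => ((p.1, p.2.1, c) : ℝ × ℝ × ℝ) := by fun_prop
  have mass {γ} (hγ : ContDiff ℝ 1 γ) {s₀} (hγs₀ : γ s₀ = p) :=
    integral_deriv_comp_curve_eq hD hT hu hM hγ hγs₀ hp hper₀
  have momentum {γ} (hγ : ContDiff ℝ 1 γ) {s₀} (hγs₀ : γ s₀ = p) :=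
    integral_mul_deriv_comp_curve_eq hD hT hu hP hγ hγs₀ hp hper₀
  have cont_a := continuous_deriv_comp_curve hD hu line_a hp
  have cont_E := continuous_deriv_comp_curve hD hu line_E hp
  have cont_u := hu.continuousOn.continuous_uncurry_right_s16 hp
  refine ⟨mass line_a rfl, mass line_E rfl, mass line_c rfl,
    momentum line_a rfl, momentum line_E rfl, momentum line_c rfl, ?_, ?_⟩
  · rw [integral_const_mul_sub_const_mul (cont_E.intervalIntegrable _ _)
      (cont_a.intervalIntegrable _ _), mass line_a rfl, mass line_E rfl]
    ring
  · simp_rw [mul_sub, mul_left_comm (u _ p)]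
    rw [integral_const_mul_sub_const_mul ((cont_u.fun_mul cont_E).intervalIntegrable _ _)
      ((cont_u.fun_mul cont_a).intervalIntegrable _ _), momentum line_a rfl, momentum line_E rfl]
    ring
end
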